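/- arXiv:2004.01186 — 8 statements merged into one kernel-verified Lean document; each statement's English description precedes it below -/
import Mathlib

section
/- Let n ≥ 4 and let A_n be the determinant of the n×n matrix whose (i,j) entry equals 1 if -1 ≤ i-j ≤ 2, equals 1 if (i,j) = (1,n), and equals 0 otherwise. Then A_n = 1 if n ≡ 0 (mod 4), A_n = 2 if n ≡ 1 (mod 4), A_n = -1 if n ≡ 2 (mod 4), and A_n = 0 if n ≡ 3 (mod 4). -/
noncomputable def Mmat (n : ℕ) : Matrix (Fin n) (Fin n) ℝ :=
  Matrix.of fun i j : Fin n =>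
      if ((-1 : ℤ) ≤ ((i : ℕ) : ℤ) - ((j : ℕ) : ℤ) ∧ ((i : ℕ) : ℤ) - ((j : ℕ) : ℤ) ≤ 2)
          ∨ ((i : ℕ) = 0 ∧ (j : ℕ) = n - 1)
      then (1 : ℝ) else 0

lemma Mmat_apply (n : ℕ) (i j : Fin n) :
    Mmat n i j = if ((j : ℕ) ≤ (i : ℕ) + 1 ∧ (i : ℕ) ≤ (j : ℕ) + 2) ∨ ((i : ℕ) = 0 ∧ (j : ℕ) = n - 1)
      then (1 : ℝ) else 0 := by
  simp only [Mmat, Matrix.of_apply]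
  congr 1
  simp only [eq_iff_iff]
  omega

lemma det_col0 {m : ℕ} (A : Matrix (Fin (m+1)) (Fin (m+1)) ℝ)
    (h : ∀ i : Fin (m+1), i ≠ 0 → A i 0 = 0) :
    A.det = A 0 0 * (A.submatrix Fin.succ Fin.succ).det := by
  rw [Matrix.det_succ_column_zero]
  rw [Fintype.sum_eq_single (0 : Fin (m+1)) (fun i hi => by simp [h i hi])]
  simp [Fin.succAbove_zero]
noncomputable def A1m (n : ℕ) : Matrix (Fin (n+7)) (Fin (n+7)) ℝ :=
  (Mmat (n+7)).updateRow ⟨1, by omega⟩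
    ((Mmat (n+7)) ⟨1, by omega⟩ + (-1 : ℝ) • (Mmat (n+7)) ⟨0, by omega⟩)
noncomputable def A2m (n : ℕ) : Matrix (Fin (n+7)) (Fin (n+7)) ℝ :=
  (A1m n).updateRow ⟨2, by omega⟩ ((A1m n) ⟨2, by omega⟩ + (-1 : ℝ) • (A1m n) ⟨0, by omega⟩)
noncomputable def A3m (n : ℕ) : Matrix (Fin (n+7)) (Fin (n+7)) ℝ :=
  (A2m n).submatrix (Equiv.swap ⟨1, by omega⟩ ⟨3, by omega⟩) id
noncomputable def A4m (n : ℕ) : Matrix (Fin (n+7)) (Fin (n+7)) ℝ :=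
  (A3m n).updateRow ⟨3, by omega⟩ ((A3m n) ⟨3, by omega⟩ + (-1 : ℝ) • (A3m n) ⟨2, by omega⟩)
noncomputable def A5m (n : ℕ) : Matrix (Fin (n+7)) (Fin (n+7)) ℝ :=
  (A4m n).updateRow ⟨4, by omega⟩ ((A4m n) ⟨4, by omega⟩ + (-1 : ℝ) • (A4m n) ⟨2, by omega⟩)
noncomputable def A6m (n : ℕ) : Matrix (Fin (n+7)) (Fin (n+7)) ℝ :=
  (A5m n).updateRow ⟨5, by omega⟩ ((A5m n) ⟨5, by omega⟩ + (1 : ℝ) • (A5m n) ⟨3, by omega⟩)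

lemma A1m_apply (n : ℕ) (i j : Fin (n+7)) :
    A1m n i j = if (i : ℕ) = 1
      then Mmat (n+7) ⟨1, by omega⟩ j - Mmat (n+7) ⟨0, by omega⟩ j
      else Mmat (n+7) i j := by
  simp only [A1m, Matrix.updateRow_apply, Pi.add_apply, Pi.smul_apply, smul_eq_mul]
  by_cases h : (i : ℕ) = 1 <;> simp [Fin.ext_iff, h] <;> ring

lemma A2m_apply (n : ℕ) (i j : Fin (n+7)) :
    A2m n i j =
      if (i : ℕ) = 1 then Mmat (n+7) ⟨1, by omega⟩ j - Mmat (n+7) ⟨0, by omega⟩ j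
      else if (i : ℕ) = 2 then Mmat (n+7) ⟨2, by omega⟩ j - Mmat (n+7) ⟨0, by omega⟩ j
      else Mmat (n+7) i j := by
  simp only [A2m, Matrix.updateRow_apply, Pi.add_apply, Pi.smul_apply, smul_eq_mul,
    A1m_apply]
  by_cases h1 : (i : ℕ) = 1 <;> by_cases h2 : (i : ℕ) = 2 <;>
    simp [Fin.ext_iff, h1, h2] <;> ring

lemma A3m_apply (n : ℕ) (i j : Fin (n+7)) :
    A3m n i j =
      if (i : ℕ) = 1 then Mmat (n+7) ⟨3, by omega⟩ j
      else if (i : ℕ) = 2 then Mmat (n+7) ⟨2, by omega⟩ j - Mmat (n+7) ⟨0, by omega⟩ j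
      else if (i : ℕ) = 3 then Mmat (n+7) ⟨1, by omega⟩ j - Mmat (n+7) ⟨0, by omega⟩ j
      else Mmat (n+7) i j := by
  simp only [A3m, Matrix.submatrix_apply, Equiv.swap_apply_def, id, A2m_apply]
  by_cases h1 : (i : ℕ) = 1 <;> by_cases h2 : (i : ℕ) = 2 <;> by_cases h3 : (i : ℕ) = 3 <;>
    simp [Fin.ext_iff, h1, h2, h3] <;> omega

lemma A4m_apply (n : ℕ) (i j : Fin (n+7)) :
    A4m n i j =
      if (i : ℕ) = 1 then Mmat (n+7) ⟨3, by omega⟩ j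
      else if (i : ℕ) = 2 then Mmat (n+7) ⟨2, by omega⟩ j - Mmat (n+7) ⟨0, by omega⟩ j
      else if (i : ℕ) = 3 then Mmat (n+7) ⟨1, by omega⟩ j - Mmat (n+7) ⟨2, by omega⟩ j
      else Mmat (n+7) i j := by
  simp only [A4m, Matrix.updateRow_apply, Pi.add_apply, Pi.smul_apply, smul_eq_mul, A3m_apply]
  by_cases h1 : (i : ℕ) = 1 <;> by_cases h2 : (i : ℕ) = 2 <;> by_cases h3 : (i : ℕ) = 3 <;>
    simp [Fin.ext_iff, h1, h2, h3] <;> ring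

lemma A5m_apply (n : ℕ) (i j : Fin (n+7)) :
    A5m n i j =
      if (i : ℕ) = 1 then Mmat (n+7) ⟨3, by omega⟩ j
      else if (i : ℕ) = 2 then Mmat (n+7) ⟨2, by omega⟩ j - Mmat (n+7) ⟨0, by omega⟩ j
      else if (i : ℕ) = 3 then Mmat (n+7) ⟨1, by omega⟩ j - Mmat (n+7) ⟨2, by omega⟩ j
      else if (i : ℕ) = 4 then
        Mmat (n+7) ⟨4, by omega⟩ j - Mmat (n+7) ⟨2, by omega⟩ j + Mmat (n+7) ⟨0, by omega⟩ j
      else Mmat (n+7) i j := by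
  simp only [A5m, Matrix.updateRow_apply, Pi.add_apply, Pi.smul_apply, smul_eq_mul, A4m_apply]
  by_cases h1 : (i : ℕ) = 1 <;> by_cases h2 : (i : ℕ) = 2 <;> by_cases h3 : (i : ℕ) = 3 <;>
    by_cases h4 : (i : ℕ) = 4 <;> simp [Fin.ext_iff, h1, h2, h3, h4] <;> ring

lemma A6m_apply (n : ℕ) (i j : Fin (n+7)) :
    A6m n i j =
      if (i : ℕ) = 1 then Mmat (n+7) ⟨3, by omega⟩ j
      else if (i : ℕ) = 2 then Mmat (n+7) ⟨2, by omega⟩ j - Mmat (n+7) ⟨0, by omega⟩ j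
      else if (i : ℕ) = 3 then Mmat (n+7) ⟨1, by omega⟩ j - Mmat (n+7) ⟨2, by omega⟩ j
      else if (i : ℕ) = 4 then
        Mmat (n+7) ⟨4, by omega⟩ j - Mmat (n+7) ⟨2, by omega⟩ j + Mmat (n+7) ⟨0, by omega⟩ j
      else if (i : ℕ) = 5 then
        Mmat (n+7) ⟨5, by omega⟩ j + Mmat (n+7) ⟨1, by omega⟩ j - Mmat (n+7) ⟨2, by omega⟩ j
      else Mmat (n+7) i j := by
  simp only [A6m, Matrix.updateRow_apply, Pi.add_apply, Pi.smul_apply, smul_eq_mul, A5m_apply]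
  by_cases h1 : (i : ℕ) = 1 <;> by_cases h2 : (i : ℕ) = 2 <;> by_cases h3 : (i : ℕ) = 3 <;>
    by_cases h4 : (i : ℕ) = 4 <;> by_cases h5 : (i : ℕ) = 5 <;>
    simp [Fin.ext_iff, h1, h2, h3, h4, h5] <;> ring

lemma A6m_det (n : ℕ) : (A6m n).det = -(Mmat (n+7)).det := by
  rw [A6m, Matrix.det_updateRow_add_smul_self _ (by simp [Fin.ext_iff]) (1 : ℝ)]
  rw [A5m, Matrix.det_updateRow_add_smul_self _ (by simp [Fin.ext_iff]) (-1 : ℝ)]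
  rw [A4m, Matrix.det_updateRow_add_smul_self _ (by simp [Fin.ext_iff]) (-1 : ℝ)]
  rw [A3m, Matrix.det_permute, Equiv.Perm.sign_swap (by simp [Fin.ext_iff])]
  rw [A2m, Matrix.det_updateRow_add_smul_self _ (by simp [Fin.ext_iff]) (-1 : ℝ)]
  rw [A1m, Matrix.det_updateRow_add_smul_self _ (by simp [Fin.ext_iff]) (-1 : ℝ)]
  norm_num

set_option maxHeartbeats 2000000 in
lemma step (n : ℕ) : (Mmat (n+7)).det = (Mmat (n+3)).det := by
  have h1 : (A6m n).det = (A6m n) 0 0 * ((A6m n).submatrix Fin.succ Fin.succ).det := by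
    refine det_col0 _ (fun i hi => ?_)
    have hv : (i : ℕ) ≠ 0 := Fin.val_ne_zero_iff.mpr hi
    rw [A6m_apply]
    simp only [Mmat_apply, Fin.val_zero]
    split_ifs <;> first | (norm_num; done) | (norm_num at *; done) | (norm_num at *; omega) | (simp_all; omega) | (exfalso; omega) | simp_all | omega
  set B1 := (A6m n).submatrix Fin.succ Fin.succ with hB1
  have h2 : B1.det = B1 0 0 * (B1.submatrix Fin.succ Fin.succ).det := by
    refine det_col0 _ (fun i hi => ?_)
    have hv : (i : ℕ) ≠ 0 := Fin.val_ne_zero_iff.mpr hi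
    rw [hB1]
    simp only [Matrix.submatrix_apply]
    rw [A6m_apply]
    simp only [Mmat_apply, Fin.val_succ, Fin.val_zero]
    split_ifs <;> first | (norm_num; done) | (norm_num at *; done) | (norm_num at *; omega) | (simp_all; omega) | (exfalso; omega) | simp_all | omega
  set B2 := B1.submatrix Fin.succ Fin.succ with hB2
  have h3 : B2.det = B2 0 0 * (B2.submatrix Fin.succ Fin.succ).det := by
    refine det_col0 _ (fun i hi => ?_)
    have hv : (i : ℕ) ≠ 0 := Fin.val_ne_zero_iff.mpr hi
    rw [hB2, hB1]
    simp only [Matrix.submatrix_apply]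
    rw [A6m_apply]
    simp only [Mmat_apply, Fin.val_succ, Fin.val_zero]
    split_ifs <;> first | (norm_num; done) | (norm_num at *; done) | (norm_num at *; omega) | (simp_all; omega) | simp_all | omega
  set B3 := B2.submatrix Fin.succ Fin.succ with hB3
  have h4 : B3.det = B3 0 0 * (B3.submatrix Fin.succ Fin.succ).det := by
    refine det_col0 _ (fun i hi => ?_)
    have hv : (i : ℕ) ≠ 0 := Fin.val_ne_zero_iff.mpr hi
    rw [hB3, hB2, hB1]
    simp only [Matrix.submatrix_apply]
    rw [A6m_apply]
    simp only [Mmat_apply, Fin.val_succ, Fin.val_zero]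
    split_ifs <;> first | (norm_num; done) | (norm_num at *; done) | (norm_num at *; omega) | (simp_all; omega) | simp_all | omega
  have hsub : B3.submatrix Fin.succ Fin.succ = Mmat (n+3) := by
    ext i j
    rw [hB3, hB2, hB1]
    simp only [Matrix.submatrix_apply]
    rw [A6m_apply]
    simp only [Mmat_apply, Fin.val_succ]
    split_ifs <;> first | (norm_num; done) | (norm_num at *; done) | (norm_num at *; omega) | (simp_all; omega) | (exfalso; omega) | simp_all | omega
  have v0 : (A6m n) 0 0 = 1 := by
    rw [A6m_apply]
    simp only [Mmat_apply, Fin.val_zero]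
    split_ifs <;> first | (norm_num; done) | (norm_num at *; done) | (norm_num at *; omega) | (simp_all; omega) | simp_all | omega
  have v1 : B1 0 0 = 1 := by
    rw [hB1]; simp only [Matrix.submatrix_apply]; rw [A6m_apply]
    simp only [Mmat_apply, Fin.val_succ, Fin.val_zero]
    split_ifs <;> first | (norm_num; done) | (norm_num at *; done) | (norm_num at *; omega) | (simp_all; omega) | simp_all | omega
  have v2 : B2 0 0 = 1 := by
    rw [hB2, hB1]; simp only [Matrix.submatrix_apply]; rw [A6m_apply]
    simp only [Mmat_apply, Fin.val_succ, Fin.val_zero]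
    split_ifs <;> first | (norm_num; done) | (norm_num at *; done) | (norm_num at *; omega) | (simp_all; omega) | simp_all | omega
  have v3 : B3 0 0 = -1 := by
    rw [hB3, hB2, hB1]; simp only [Matrix.submatrix_apply]; rw [A6m_apply]
    simp only [Mmat_apply, Fin.val_succ, Fin.val_zero]
    split_ifs <;> first | (norm_num; done) | (norm_num at *; done) | (norm_num at *; omega) | (simp_all; omega) | simp_all | omega
  have := A6m_det n
  rw [h1, v0, h2, v1, h3, v2, h4, v3, hsub] at this
  linarith
set_option maxHeartbeats 1600000 in
set_option maxRecDepth 8000 in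
lemma base3 : (Mmat 3).det = 0 := by
  simp [Mmat, Matrix.det_succ_row_zero, Fin.sum_univ_succ, Fin.succAbove]
set_option maxHeartbeats 1600000 in
set_option maxRecDepth 8000 in
lemma base4 : (Mmat 4).det = 1 := by
  simp [Mmat, Matrix.det_succ_row_zero, Fin.sum_univ_succ, Fin.succAbove]
set_option maxHeartbeats 1600000 in
set_option maxRecDepth 8000 in
lemma base5 : (Mmat 5).det = 2 := by
  simp [Mmat, Matrix.det_succ_row_zero, Fin.sum_univ_succ, Fin.succAbove]
  norm_num
set_option maxHeartbeats 1600000 in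
set_option maxRecDepth 8000 in
lemma base6 : (Mmat 6).det = -1 := by
  simp [Mmat, Matrix.det_succ_row_zero, Fin.sum_univ_succ, Fin.succAbove]
  norm_num

lemma detM : ∀ n : ℕ, 3 ≤ n → (Mmat n).det =
    if n % 4 = 0 then 1 else if n % 4 = 1 then 2 else if n % 4 = 2 then -1 else 0 := by
  intro n
  induction n using Nat.strong_induction_on with
  | _ n ih =>
    intro h
    rcases lt_or_ge n 7 with h7 | h7
    · interval_cases n
      · simpa using base3
      · simpa using base4
      · simpa using base5
      · simpa using base6
    · obtain ⟨m, rfl⟩ : ∃ m, n = m + 7 := ⟨n - 7, by omega⟩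
      rw [step m, ih (m + 3) (by omega) (by omega)]
      have h4 : (m + 3) % 4 = (m + 7) % 4 := by omega
      rw [h4]

/-- Conjecture 6.1 of Anđelić–Fonseca: the determinant `A n` of the `n × n`
Toeplitz band matrix with ones for `-1 ≤ i - j ≤ 2` and an extra `1` in the
top-right corner `(1, n)` (`0`-indexed `(0, n-1)`). -/
theorem stmt_0 (n : ℕ) (hn : 4 ≤ n)
    (A : ℝ)
    (hA : A = Matrix.det (Matrix.of fun i j : Fin n =>
      if ((-1 : ℤ) ≤ ((i : ℕ) : ℤ) - ((j : ℕ) : ℤ) ∧ ((i : ℕ) : ℤ) - ((j : ℕ) : ℤ) ≤ 2)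
          ∨ ((i : ℕ) = 0 ∧ (j : ℕ) = n - 1)
      then (1 : ℝ) else 0)) :
    (n % 4 = 0 → A = 1) ∧ (n % 4 = 1 → A = 2) ∧
    (n % 4 = 2 → A = -1) ∧ (n % 4 = 3 → A = 0) := by
  have hA' : A = (Mmat n).det := hA
  have hd := detM n (by omega)
  rw [← hA'] at hd
  refine ⟨fun h => ?_, fun h => ?_, fun h => ?_, fun h => ?_⟩ <;> rw [hd, h] <;> norm_num
end

section
/- Let n ≥ 5 and let M_n be the determinant of the n×n matrix whose (i,j) entry equals 1 if -1 ≤ i-j ≤ 2, equals 1 if (i,j) = (1,n-1) or (i,j) = (2,n), and equals 0 otherwise. Then M_n = 0 if n ≡ 0 (mod 4), M_n = 2 if n ≡ 1 (mod 4), M_n = 3 if n ≡ 2 (mod 4), and M_n = 1 if n ≡ 3 (mod 4). -/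
open Matrix

noncomputable def bM (n : ℕ) : Matrix (Fin n) (Fin n) ℝ :=
  Matrix.of fun i j => if (j:ℕ) ≤ (i:ℕ) + 1 ∧ (i:ℕ) ≤ (j:ℕ) + 2 then (1:ℝ) else 0

noncomputable def Dd (n : ℕ) : ℝ := (bM n).det

noncomputable def EeM (n : ℕ) : Matrix (Fin n) (Fin n) ℝ :=
  Matrix.of fun i j : Fin n =>
    if ((j:ℕ) = 0 ∧ (i:ℕ) ≤ 1) ∨ ((j:ℕ) ≠ 0 ∧ (j:ℕ) ≤ (i:ℕ)+1 ∧ (i:ℕ) ≤ (j:ℕ)+2)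
    then (1:ℝ) else 0

noncomputable def FfM (n : ℕ) : Matrix (Fin n) (Fin n) ℝ :=
  Matrix.of fun i j : Fin n =>
    if ((i:ℕ) = 0 ∧ (j:ℕ) = 0) ∨ ((i:ℕ) ≠ 0 ∧ (j:ℕ) ≤ (i:ℕ)+1 ∧ (i:ℕ) ≤ (j:ℕ)+2)
    then (1:ℝ) else 0

noncomputable def Ee (n : ℕ) : ℝ := (EeM n).det
noncomputable def Ff (n : ℕ) : ℝ := (FfM n).det

lemma sAv {k : ℕ} (p : Fin (k+1)) (j : Fin k) :
    (p.succAbove j : ℕ) = if (j:ℕ) < (p:ℕ) then (j:ℕ) else (j:ℕ)+1 := by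
  rw [Fin.succAbove]
  split_ifs with h h' h' <;> simp_all [Fin.lt_def]

lemma Dd_zero : Dd 0 = 1 := Matrix.det_fin_zero
lemma Dd_one : Dd 1 = 1 := by rw [Dd, Matrix.det_fin_one]; norm_num [bM]
lemma Dd_two : Dd 2 = 0 := by rw [Dd, Matrix.det_fin_two]; norm_num [bM]

lemma Ff_succ (m : ℕ) : Ff (m+1) = Dd m := by
  rw [Ff, Matrix.det_succ_row_zero, Finset.sum_eq_single (0 : Fin (m+1))]
  · have hsub : (FfM (m+1)).submatrix Fin.succ (0 : Fin (m+1)).succAbove = bM m := by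
      ext i j
      simp only [Matrix.submatrix_apply, Matrix.of_apply, bM, FfM, Fin.succAbove_zero,
        Fin.val_succ]
      exact if_congr (by omega) rfl rfl
    rw [hsub]
    simp [Dd, FfM]
  · intro b _ hb
    have hb' : (b:ℕ) ≠ 0 := fun h => hb (Fin.ext h)
    simp [FfM, hb', hb]
  · simp

lemma Ee_succ (m : ℕ) : Ee (m+2) = Dd (m+1) - Ff (m+1) := by
  rw [Ee, Matrix.det_succ_column_zero, Fin.sum_univ_succ, Fin.sum_univ_succ]
  simp only [Fin.succ_zero_eq_one]
  have h0 : (EeM (m+2)).submatrix (0 : Fin (m+2)).succAbove Fin.succ = bM (m+1) := by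
    ext i j
    simp only [Matrix.submatrix_apply, Matrix.of_apply, bM, EeM, Fin.succAbove_zero,
      Fin.val_succ]
    exact if_congr (by omega) rfl rfl
  have h1 : (EeM (m+2)).submatrix (1 : Fin (m+2)).succAbove Fin.succ = FfM (m+1) := by
    ext i j
    simp only [Matrix.submatrix_apply, Matrix.of_apply, EeM, FfM, sAv, Fin.val_succ,
      Fin.val_one]
    rcases lt_or_ge (i:ℕ) 1 with h | h
    · simp only [h, ↓reduceIte]; exact if_congr (by omega) rfl rfl
    · simp only [show ¬ ((i:ℕ) < 1) by omega, ↓reduceIte]; exact if_congr (by omega) rfl rfl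
  rw [h0, h1]
  have hz : ∀ i : Fin m, EeM (m+2) i.succ.succ 0 = 0 := by
    intro i
    simp only [EeM, Matrix.of_apply, Fin.val_succ, Fin.val_zero]
    exact if_neg (by omega)
  have hrest : (∑ i : Fin m, (-1) ^ ((i.succ.succ : Fin (m+2)):ℕ) * EeM (m+2) i.succ.succ 0 *
      ((EeM (m+2)).submatrix (i.succ.succ).succAbove Fin.succ).det) = 0 := by
    apply Finset.sum_eq_zero
    intro i _
    rw [hz i]; ring
  rw [hrest]
  have e00 : EeM (m+2) 0 0 = 1 := by
    simp only [EeM, Matrix.of_apply, Fin.val_zero]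
    norm_num
  have e10 : EeM (m+2) 1 0 = 1 := by
    simp only [EeM, Matrix.of_apply, Fin.val_zero, Fin.val_one]
    norm_num
  rw [e00, e10]
  simp [Dd, Ff]
  ring

lemma Dd_rec (m : ℕ) : Dd (m+3) = Dd (m+2) - Ee (m+2) := by
  rw [Dd, Matrix.det_succ_row_zero, Fin.sum_univ_succ, Fin.sum_univ_succ]
  simp only [Fin.succ_zero_eq_one]
  have h0 : (bM (m+3)).submatrix Fin.succ (0 : Fin (m+3)).succAbove = bM (m+2) := by
    ext i j
    simp only [Matrix.submatrix_apply, Matrix.of_apply, bM, Fin.succAbove_zero, Fin.val_succ]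
    exact if_congr (by omega) rfl rfl
  have h1 : (bM (m+3)).submatrix Fin.succ (1 : Fin (m+3)).succAbove = EeM (m+2) := by
    ext i j
    simp only [Matrix.submatrix_apply, Matrix.of_apply, bM, EeM, sAv, Fin.val_succ, Fin.val_one]
    rcases lt_or_ge (j:ℕ) 1 with h | h
    · simp only [h, ↓reduceIte]; exact if_congr (by omega) rfl rfl
    · simp only [show ¬ ((j:ℕ) < 1) by omega, ↓reduceIte]; exact if_congr (by omega) rfl rfl
  rw [h0, h1]
  have hz : ∀ j : Fin (m+1), bM (m+3) 0 j.succ.succ = 0 := by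
    intro j
    simp only [bM, Matrix.of_apply, Fin.val_succ, Fin.val_zero]
    exact if_neg (by omega)
  have hrest : (∑ j : Fin (m+1), (-1) ^ ((j.succ.succ : Fin (m+3)):ℕ) * bM (m+3) 0 j.succ.succ *
      ((bM (m+3)).submatrix Fin.succ (j.succ.succ).succAbove).det) = 0 := by
    apply Finset.sum_eq_zero
    intro j _
    rw [hz j]; ring
  rw [hrest]
  have e00 : bM (m+3) 0 0 = 1 := by simp only [bM, Matrix.of_apply, Fin.val_zero]; norm_num
  have e01 : bM (m+3) 0 1 = 1 := by
    simp only [bM, Matrix.of_apply, Fin.val_zero, Fin.val_one]; norm_num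
  rw [e00, e01]
  simp [Dd, Ee]
  ring

lemma Dd_rec3 (m : ℕ) : Dd (m+3) = Dd (m+2) - Dd (m+1) + Dd m := by
  rw [Dd_rec, Ee_succ, Ff_succ]; ring

lemma Dd_val (n : ℕ) : Dd n = if n % 4 = 0 ∨ n % 4 = 1 then 1 else 0 := by
  induction n using Nat.strong_induction_on with
  | _ n ih =>
    match n with
    | 0 => simpa using Dd_zero
    | 1 => simpa using Dd_one
    | 2 => rw [Dd_two]; norm_num
    | (m+3) =>
      rw [Dd_rec3, ih (m+2) (by omega), ih (m+1) (by omega), ih m (by omega)]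
      rcases (by omega : m % 4 = 0 ∨ m % 4 = 1 ∨ m % 4 = 2 ∨ m % 4 = 3) with h|h|h|h
      · have e1 : (m+1) % 4 = 1 := by omega
        have e2 : (m+2) % 4 = 2 := by omega
        have e3 : (m+3) % 4 = 3 := by omega
        rw [h, e1, e2, e3]; norm_num
      · have e1 : (m+1) % 4 = 2 := by omega
        have e2 : (m+2) % 4 = 3 := by omega
        have e3 : (m+3) % 4 = 0 := by omega
        rw [h, e1, e2, e3]; norm_num
      · have e1 : (m+1) % 4 = 3 := by omega
        have e2 : (m+2) % 4 = 0 := by omega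
        have e3 : (m+3) % 4 = 1 := by omega
        rw [h, e1, e2, e3]; norm_num
      · have e1 : (m+1) % 4 = 0 := by omega
        have e2 : (m+2) % 4 = 1 := by omega
        have e3 : (m+3) % 4 = 2 := by omega
        rw [h, e1, e2, e3]; norm_num

noncomputable def bM' (n : ℕ) : Matrix (Fin n) (Fin n) ℝ :=
  Matrix.of fun i j => if (j:ℕ) ≤ (i:ℕ) + 2 ∧ (i:ℕ) ≤ (j:ℕ) + 1 then (1:ℝ) else 0



lemma bM'_det (n : ℕ) : (bM' n).det = Dd n := by
  have h : bM' n = (bM n)ᵀ := by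
    ext i j
    simp only [bM, bM', Matrix.transpose_apply, Matrix.of_apply]
    exact if_congr (by omega) rfl rfl
  rw [h, Matrix.det_transpose, Dd]

noncomputable def GM (m : ℕ) : Matrix (Fin (m+4)) (Fin (m+4)) ℝ :=
  Matrix.of fun i j => if ((j:ℕ) < m+3 ∧ (j:ℕ) ≤ (i:ℕ)+2 ∧ (i:ℕ) ≤ (j:ℕ)+1)
    ∨ ((j:ℕ) = m+3 ∧ m+2 ≤ (i:ℕ)) then (1:ℝ) else 0

noncomputable def HM (m : ℕ) : Matrix (Fin (m+3)) (Fin (m+3)) ℝ :=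
  Matrix.of fun i j => if ((i:ℕ) ≤ m+1 ∧ (j:ℕ) ≤ (i:ℕ)+2 ∧ (i:ℕ) ≤ (j:ℕ)+1)
    ∨ ((i:ℕ) = m+2 ∧ (j:ℕ) = m+2) then (1:ℝ) else 0

lemma HM_det (m : ℕ) : (HM m).det = Dd (m+2) := by
  rw [Matrix.det_succ_row (HM m) ⟨m+2, by omega⟩,
    Finset.sum_eq_single (⟨m+2, by omega⟩ : Fin (m+3))]
  · have hsub : (HM m).submatrix (⟨m+2, by omega⟩ : Fin (m+3)).succAbove
        (⟨m+2, by omega⟩ : Fin (m+3)).succAbove = bM' (m+2) := by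
      ext i j
      have hi := i.isLt
      have hj := j.isLt
      simp only [Matrix.submatrix_apply, Matrix.of_apply, HM, bM', sAv]
      rw [if_pos (show (i:ℕ) < m+2 from hi), if_pos (show (j:ℕ) < m+2 from hj)]
      exact if_congr (by omega) rfl rfl
    rw [hsub, bM'_det]
    have hd : HM m ⟨m+2, by omega⟩ ⟨m+2, by omega⟩ = 1 := by
      simp only [HM, Matrix.of_apply]
      exact if_pos (by simp)
    rw [hd]
    have : ((⟨m+2, by omega⟩ : Fin (m+3)) : ℕ) + ((⟨m+2, by omega⟩ : Fin (m+3)) : ℕ) = m+2+(m+2) := rfl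
    rw [this]
    rw [Even.neg_one_pow ⟨m+2, by ring⟩]
    ring
  · intro b _ hb
    have hb' : (b:ℕ) ≠ m+2 := fun h => hb (Fin.ext h)
    have hbl := b.isLt
    have hz : HM m ⟨m+2, by omega⟩ b = 0 := by
      simp only [HM, Matrix.of_apply]
      exact if_neg (by omega)
    rw [hz]; ring
  · simp

lemma GM_det (m : ℕ) : (GM m).det = Dd (m+3) - Dd (m+2) := by
  rw [Matrix.det_succ_column (GM m) ⟨m+3, by omega⟩]
  have key : ∀ i : Fin (m+4), i ∈ Finset.univ →
      i ∉ ({⟨m+2, by omega⟩, ⟨m+3, by omega⟩} : Finset (Fin (m+4))) →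
      (-1:ℝ)^((i:ℕ) + ((⟨m+3, by omega⟩ : Fin (m+4)):ℕ)) * GM m i ⟨m+3, by omega⟩ *
        ((GM m).submatrix i.succAbove (⟨m+3, by omega⟩ : Fin (m+4)).succAbove).det = 0 := by
    intro i _ hi
    simp only [Finset.mem_insert, Finset.mem_singleton] at hi
    push_neg at hi
    have h1 : (i:ℕ) ≠ m+2 := fun h => hi.1 (Fin.ext h)
    have h2 : (i:ℕ) ≠ m+3 := fun h => hi.2 (Fin.ext h)
    have hz : GM m i ⟨m+3, by omega⟩ = 0 := by
      simp only [GM, Matrix.of_apply, Fin.val_mk]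
      exact if_neg (by omega)
    rw [hz]; ring
  rw [← Finset.sum_subset
      (Finset.subset_univ ({⟨m+2, by omega⟩, ⟨m+3, by omega⟩} : Finset (Fin (m+4)))) key]
  rw [Finset.sum_pair (by
    intro h
    have := congrArg Fin.val h
    simp only [Fin.val_mk] at this
    omega : (⟨m+2, by omega⟩ : Fin (m+4)) ≠ ⟨m+3, by omega⟩)]
  have hsub1 : (GM m).submatrix (⟨m+2, by omega⟩ : Fin (m+4)).succAbove
      (⟨m+3, by omega⟩ : Fin (m+4)).succAbove = HM m := by
    ext i j
    have hi := i.isLt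
    have hj := j.isLt
    simp only [Matrix.submatrix_apply, Matrix.of_apply, GM, HM, sAv, Fin.val_mk]
    rw [if_pos (show (j:ℕ) < m+3 from hj)]
    rcases lt_or_ge (i:ℕ) (m+2) with h | h
    · rw [if_pos h]; exact if_congr (by omega) rfl rfl
    · rw [if_neg (by omega : ¬ ((i:ℕ) < m+2))]; exact if_congr (by omega) rfl rfl
  have hsub2 : (GM m).submatrix (⟨m+3, by omega⟩ : Fin (m+4)).succAbove
      (⟨m+3, by omega⟩ : Fin (m+4)).succAbove = bM' (m+3) := by
    ext i j
    have hi := i.isLt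
    have hj := j.isLt
    simp only [Matrix.submatrix_apply, Matrix.of_apply, GM, bM', sAv, Fin.val_mk]
    rw [if_pos (show (i:ℕ) < m+3 from hi), if_pos (show (j:ℕ) < m+3 from hj)]
    exact if_congr (by omega) rfl rfl
  have he1 : GM m ⟨m+2, by omega⟩ ⟨m+3, by omega⟩ = 1 := by
    simp only [GM, Matrix.of_apply, Fin.val_mk]
    exact if_pos (by simp)
  have he2 : GM m ⟨m+3, by omega⟩ ⟨m+3, by omega⟩ = 1 := by
    simp only [GM, Matrix.of_apply, Fin.val_mk]
    exact if_pos (by simp)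
  rw [hsub1, hsub2, he1, he2, HM_det, bM'_det]
  have hv1 : ((⟨m+2, by omega⟩ : Fin (m+4)):ℕ) + ((⟨m+3, by omega⟩ : Fin (m+4)):ℕ)
      = m+2+(m+3) := rfl
  have hv2 : ((⟨m+3, by omega⟩ : Fin (m+4)):ℕ) + ((⟨m+3, by omega⟩ : Fin (m+4)):ℕ)
      = m+3+(m+3) := rfl
  rw [hv1, hv2, Odd.neg_one_pow ⟨m+2, by ring⟩, Even.neg_one_pow ⟨m+3, by ring⟩]
  ring

noncomputable def e0v (n : ℕ) : Fin n → ℝ := fun i => if (i:ℕ) = 0 then 1 else 0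
noncomputable def e1v (n : ℕ) : Fin n → ℝ := fun i => if (i:ℕ) = 1 then 1 else 0

lemma T2_det (m : ℕ) :
    ((bM (m+5)).updateCol ⟨m+3, by omega⟩ (e0v (m+5))).det
      = (-1:ℝ)^(m+3) * (Dd (m+3) - Dd (m+2)) := by
  rw [Matrix.det_succ_column _ ⟨m+3, by omega⟩, Finset.sum_eq_single (0 : Fin (m+5))]
  · have hval : (bM (m+5)).updateCol ⟨m+3, by omega⟩ (e0v (m+5)) 0 ⟨m+3, by omega⟩ = 1 := by
      rw [Matrix.updateCol_self]
      simp [e0v]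
    have hsub : ((bM (m+5)).updateCol ⟨m+3, by omega⟩ (e0v (m+5))).submatrix
        (0 : Fin (m+5)).succAbove (⟨m+3, by omega⟩ : Fin (m+5)).succAbove = GM m := by
      ext i j
      have hj := j.isLt
      rw [Matrix.submatrix_apply, Matrix.updateCol_ne (Fin.succAbove_ne _ j)]
      simp only [bM, GM, Matrix.of_apply, Fin.succAbove_zero, Fin.val_succ, sAv, Fin.val_mk]
      rcases lt_or_ge (j:ℕ) (m+3) with h | h
      · rw [if_pos h]; exact if_congr (by omega) rfl rfl
      · rw [if_neg (by omega : ¬ ((j:ℕ) < m+3))]; exact if_congr (by omega) rfl rfl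
    have hsgn : ((0:Fin (m+5)):ℕ) + ((⟨m+3, by omega⟩ : Fin (m+5)):ℕ) = m+3 := by simp
    rw [hval, hsub, GM_det, hsgn]
    ring
  · intro b _ hb
    have hb' : (b:ℕ) ≠ 0 := by
      intro h; apply hb; exact Fin.ext (by simp [h])
    rw [Matrix.updateCol_self]
    simp [e0v, hb']
  · simp

noncomputable def LM (m : ℕ) : Matrix (Fin (m+4)) (Fin (m+4)) ℝ :=
  Matrix.of fun i j => if ((i:ℕ) = 0 ∧ (j:ℕ) ≤ 1)
    ∨ (1 ≤ (i:ℕ) ∧ (j:ℕ) ≤ (i:ℕ)+2 ∧ (i:ℕ) ≤ (j:ℕ)+1) then (1:ℝ) else 0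

lemma LM_det (m : ℕ) : (LM m).det = Dd (m+3) - Dd (m+2) := by
  have h : LM m = (EeM (m+4))ᵀ := by
    ext i j
    simp only [LM, EeM, Matrix.transpose_apply, Matrix.of_apply]
    exact if_congr (by omega) rfl rfl
  rw [h, Matrix.det_transpose]
  have h2 : (EeM (m+4)).det = Ee (m+4) := rfl
  rw [h2, Ee_succ, Ff_succ]

lemma T3_det (m : ℕ) :
    ((bM (m+5)).updateCol ⟨m+4, by omega⟩ (e1v (m+5))).det
      = (-1:ℝ)^(m+5) * (Dd (m+3) - Dd (m+2)) := by
  rw [Matrix.det_succ_column _ ⟨m+4, by omega⟩, Finset.sum_eq_single (1 : Fin (m+5))]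
  · have hval : (bM (m+5)).updateCol ⟨m+4, by omega⟩ (e1v (m+5)) 1 ⟨m+4, by omega⟩ = 1 := by
      rw [Matrix.updateCol_self]
      simp [e1v]
    have hsub : ((bM (m+5)).updateCol ⟨m+4, by omega⟩ (e1v (m+5))).submatrix
        (1 : Fin (m+5)).succAbove (⟨m+4, by omega⟩ : Fin (m+5)).succAbove = LM m := by
      ext i j
      have hj := j.isLt
      rw [Matrix.submatrix_apply, Matrix.updateCol_ne (Fin.succAbove_ne _ j)]
      simp only [bM, LM, Matrix.of_apply, sAv, Fin.val_mk, Fin.val_one]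
      rw [if_pos (show (j:ℕ) < m+4 from hj)]
      rcases lt_or_ge (i:ℕ) 1 with h | h
      · simp only [h, ↓reduceIte]; exact if_congr (by omega) rfl rfl
      · simp only [show ¬ ((i:ℕ) < 1) by omega, ↓reduceIte]; exact if_congr (by omega) rfl rfl
    have hsgn : ((1:Fin (m+5)):ℕ) + ((⟨m+4, by omega⟩ : Fin (m+5)):ℕ) = m+5 := by
      simp only [Fin.val_one, Fin.val_mk]
      omega
    rw [hval, hsub, LM_det, hsgn]
    ring
  · intro b _ hb
    have hb' : (b:ℕ) ≠ 1 := by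
      intro h; apply hb; exact Fin.ext (by simp [h])
    rw [Matrix.updateCol_self]
    simp [e1v, hb']
  · simp

noncomputable def PM (m : ℕ) : Matrix (Fin (m+4)) (Fin (m+4)) ℝ :=
  Matrix.of fun i j => if ((j:ℕ) ≤ m+2 ∧ (j:ℕ) ≤ (i:ℕ)+2 ∧ (i:ℕ) ≤ (j:ℕ)+1)
    ∨ ((j:ℕ) = m+3 ∧ (i:ℕ) = 0) then (1:ℝ) else 0

noncomputable def UM (m : ℕ) : Matrix (Fin (m+3)) (Fin (m+3)) ℝ :=
  Matrix.of fun i j => if ((j:ℕ) ≤ (i:ℕ)+3 ∧ (i:ℕ) ≤ (j:ℕ)) then (1:ℝ) else 0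

lemma UM_det (m : ℕ) : (UM m).det = 1 := by
  rw [Matrix.det_of_upperTriangular (by
    intro i j hlt
    have : (j:ℕ) < (i:ℕ) := hlt
    simp only [UM, Matrix.of_apply]
    exact if_neg (by omega))]
  apply Finset.prod_eq_one
  intro i _
  simp only [UM, Matrix.of_apply]
  exact if_pos (by omega)

lemma PM_det (m : ℕ) : (PM m).det = (-1:ℝ)^(m+3) := by
  rw [Matrix.det_succ_column _ ⟨m+3, by omega⟩, Finset.sum_eq_single (0 : Fin (m+4))]
  · have hval : PM m 0 ⟨m+3, by omega⟩ = 1 := by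
      simp only [PM, Matrix.of_apply, Fin.val_mk, Fin.val_zero]
      exact if_pos (by simp)
    have hsub : (PM m).submatrix (0 : Fin (m+4)).succAbove
        (⟨m+3, by omega⟩ : Fin (m+4)).succAbove = UM m := by
      ext i j
      have hj := j.isLt
      simp only [Matrix.submatrix_apply, PM, UM, Matrix.of_apply, Fin.succAbove_zero,
        Fin.val_succ, sAv, Fin.val_mk]
      rw [if_pos (show (j:ℕ) < m+3 from hj)]
      exact if_congr (by omega) rfl rfl
    have hsgn : ((0:Fin (m+4)):ℕ) + ((⟨m+3, by omega⟩ : Fin (m+4)):ℕ) = m+3 := by simp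
    rw [hval, hsub, UM_det, hsgn]
    ring
  · intro b _ hb
    have hb' : (b:ℕ) ≠ 0 := by
      intro h; apply hb; exact Fin.ext (by simp [h])
    have hz : PM m b ⟨m+3, by omega⟩ = 0 := by
      simp only [PM, Matrix.of_apply, Fin.val_mk]
      exact if_neg (by omega)
    rw [hz]; ring
  · simp

lemma T4_det (m : ℕ) :
    (((bM (m+5)).updateCol ⟨m+4, by omega⟩ (e1v (m+5))).updateCol
      ⟨m+3, by omega⟩ (e0v (m+5))).det = 1 := by
  rw [Matrix.det_succ_column _ ⟨m+3, by omega⟩, Finset.sum_eq_single (0 : Fin (m+5))]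
  · have hval : ((bM (m+5)).updateCol ⟨m+4, by omega⟩ (e1v (m+5))).updateCol
        ⟨m+3, by omega⟩ (e0v (m+5)) 0 ⟨m+3, by omega⟩ = 1 := by
      rw [Matrix.updateCol_self]
      simp [e0v]
    have hsub : (((bM (m+5)).updateCol ⟨m+4, by omega⟩ (e1v (m+5))).updateCol
        ⟨m+3, by omega⟩ (e0v (m+5))).submatrix
        (0 : Fin (m+5)).succAbove (⟨m+3, by omega⟩ : Fin (m+5)).succAbove = PM m := by
      ext i j
      have hj := j.isLt
      rw [Matrix.submatrix_apply, Matrix.updateCol_ne (Fin.succAbove_ne _ j)]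
      rcases lt_or_ge (j:ℕ) (m+3) with h | h
      · have hne : (⟨m+3, by omega⟩ : Fin (m+5)).succAbove j ≠ ⟨m+4, by omega⟩ := by
          apply Fin.ne_of_val_ne
          rw [sAv, if_pos (show (j:ℕ) < m+3 from h)]
          simp only [Fin.val_mk]
          omega
        rw [Matrix.updateCol_ne hne]
        simp only [bM, PM, Matrix.of_apply, Fin.succAbove_zero, Fin.val_succ, sAv, Fin.val_mk]
        rw [if_pos (show (j:ℕ) < m+3 from h)]
        exact if_congr (by omega) rfl rfl
      · have heq : (⟨m+3, by omega⟩ : Fin (m+5)).succAbove j = ⟨m+4, by omega⟩ := by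
          apply Fin.ext
          rw [sAv, if_neg (by omega : ¬ ((j:ℕ) < m+3))]
          simp only [Fin.val_mk]
          omega
        rw [heq, Matrix.updateCol_self]
        simp only [e1v, PM, Matrix.of_apply, Fin.succAbove_zero, Fin.val_succ]
        exact if_congr (by omega) rfl rfl
    have hsgn : ((0:Fin (m+5)):ℕ) + ((⟨m+3, by omega⟩ : Fin (m+5)):ℕ) = m+3 := by simp
    rw [hval, hsub, PM_det, hsgn]
    have hh : ((-1:ℝ))^(m+3) * ((-1:ℝ))^(m+3) = 1 := by
      rw [← pow_add]; exact Even.neg_one_pow ⟨m+3, by ring⟩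
    linear_combination hh
  · intro b _ hb
    have hb' : (b:ℕ) ≠ 0 := by
      intro h; apply hb; exact Fin.ext (by simp [h])
    rw [Matrix.updateCol_self]
    simp [e0v, hb']
  · simp


/-- Conjecture 6.2 of Anđelić–Fonseca: the determinant `M n` of the `n × n`
Toeplitz band matrix with ones for `-1 ≤ i - j ≤ 2` and extra `1` entries at
positions `(1, n-1)` and `(2, n)` (`0`-indexed `(0, n-2)` and `(1, n-1)`). -/
theorem stmt_1 (n : ℕ) (hn : 5 ≤ n)
    (M : ℝ)
    (hM : M = Matrix.det (Matrix.of fun i j : Fin n =>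
      if ((-1 : ℤ) ≤ ((i : ℕ) : ℤ) - ((j : ℕ) : ℤ) ∧ ((i : ℕ) : ℤ) - ((j : ℕ) : ℤ) ≤ 2)
          ∨ ((i : ℕ) = 0 ∧ (j : ℕ) = n - 2) ∨ ((i : ℕ) = 1 ∧ (j : ℕ) = n - 1)
      then (1 : ℝ) else 0)) :
    (n % 4 = 0 → M = 0) ∧ (n % 4 = 1 → M = 2) ∧
    (n % 4 = 2 → M = 3) ∧ (n % 4 = 3 → M = 1) := by
  obtain ⟨m, rfl⟩ : ∃ m, n = m + 5 := ⟨n - 5, by omega⟩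
  subst hM
  have hpq : (⟨m+3, by omega⟩ : Fin (m+5)) ≠ ⟨m+4, by omega⟩ := by
    apply Fin.ne_of_val_ne
    simp only [Fin.val_mk]
    omega
  have hmat : (Matrix.of fun i j : Fin (m+5) =>
      if ((-1 : ℤ) ≤ ((i : ℕ) : ℤ) - ((j : ℕ) : ℤ) ∧ ((i : ℕ) : ℤ) - ((j : ℕ) : ℤ) ≤ 2)
          ∨ ((i : ℕ) = 0 ∧ (j : ℕ) = m + 5 - 2) ∨ ((i : ℕ) = 1 ∧ (j : ℕ) = m + 5 - 1)
      then (1 : ℝ) else 0) =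
      Matrix.updateCol
        (Matrix.updateCol (bM (m+5)) ⟨m+3, by omega⟩
          (fun i => bM (m+5) i ⟨m+3, by omega⟩ + e0v (m+5) i))
        ⟨m+4, by omega⟩ (fun i => bM (m+5) i ⟨m+4, by omega⟩ + e1v (m+5) i) := by
    ext i j
    by_cases hjq : j = (⟨m+4, by omega⟩ : Fin (m+5))
    · subst hjq
      rw [Matrix.updateCol_self]
      simp only [Matrix.of_apply, bM, e1v, Fin.val_mk]
      split_ifs <;> first | (exfalso; omega) | norm_num
    · rw [Matrix.updateCol_ne hjq]
      have hj2 : (j:ℕ) ≠ m+4 := fun h => hjq (Fin.ext h)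
      by_cases hjp : j = (⟨m+3, by omega⟩ : Fin (m+5))
      · subst hjp
        rw [Matrix.updateCol_self]
        simp only [Matrix.of_apply, bM, e0v, Fin.val_mk]
        split_ifs <;> first | (exfalso; omega) | norm_num
      · rw [Matrix.updateCol_ne hjp]
        have hj1 : (j:ℕ) ≠ m+3 := fun h => hjp (Fin.ext h)
        simp only [Matrix.of_apply, bM]
        exact if_congr (by omega) rfl rfl
  rw [hmat]
  have hsplit1 : (fun i => bM (m+5) i (⟨m+4, by omega⟩ : Fin (m+5)) + e1v (m+5) i)
      = (fun i => Matrix.updateCol (bM (m+5)) ⟨m+3, by omega⟩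
          (fun i => bM (m+5) i ⟨m+3, by omega⟩ + e0v (m+5) i) i ⟨m+4, by omega⟩)
        + e1v (m+5) := by
    funext i
    rw [Pi.add_apply, Matrix.updateCol_ne hpq.symm]
  rw [hsplit1, Matrix.det_updateCol_add, Matrix.updateCol_eq_self]
  have hsplit2 : (fun i => bM (m+5) i (⟨m+3, by omega⟩ : Fin (m+5)) + e0v (m+5) i)
      = (fun i => bM (m+5) i (⟨m+3, by omega⟩ : Fin (m+5))) + e0v (m+5) := rfl
  rw [hsplit2, Matrix.det_updateCol_add, Matrix.updateCol_eq_self]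
  have hcomm : Matrix.updateCol
      (Matrix.updateCol (bM (m+5)) ⟨m+3, by omega⟩
        ((fun i => bM (m+5) i (⟨m+3, by omega⟩ : Fin (m+5))) + e0v (m+5)))
      ⟨m+4, by omega⟩ (e1v (m+5)) =
      Matrix.updateCol
        (Matrix.updateCol (bM (m+5)) ⟨m+4, by omega⟩ (e1v (m+5)))
        ⟨m+3, by omega⟩
        ((fun i => Matrix.updateCol (bM (m+5)) ⟨m+4, by omega⟩ (e1v (m+5)) i
            (⟨m+3, by omega⟩ : Fin (m+5))) + e0v (m+5)) := by
    ext i j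
    by_cases hjq : j = (⟨m+4, by omega⟩ : Fin (m+5))
    · subst hjq
      rw [Matrix.updateCol_self, Matrix.updateCol_ne hpq.symm, Matrix.updateCol_self]
    · by_cases hjp : j = (⟨m+3, by omega⟩ : Fin (m+5))
      · subst hjp
        rw [Matrix.updateCol_ne hpq, Matrix.updateCol_self, Matrix.updateCol_self]
        show bM (m+5) i ⟨m+3, by omega⟩ + e0v (m+5) i
          = Matrix.updateCol (bM (m+5)) ⟨m+4, by omega⟩ (e1v (m+5)) i ⟨m+3, by omega⟩
            + e0v (m+5) i
        rw [Matrix.updateCol_ne hpq]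
      · rw [Matrix.updateCol_ne hjq, Matrix.updateCol_ne hjp,
          Matrix.updateCol_ne hjp, Matrix.updateCol_ne hjq]
  rw [hcomm, Matrix.det_updateCol_add, Matrix.updateCol_eq_self]
  rw [T2_det, T3_det, T4_det]
  have hDdet : (bM (m+5)).det = Dd (m+5) := rfl
  rw [hDdet, Dd_val (m+5), Dd_val (m+3), Dd_val (m+2)]
  refine ⟨?_, ?_, ?_, ?_⟩ <;> intro h
  · -- n % 4 = 0, m % 4 = 3
    have e5 : (m+5)%4 = 0 := by omega
    have e3 : (m+3)%4 = 2 := by omega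
    have e2 : (m+2)%4 = 1 := by omega
    have p3 : (-1:ℝ)^(m+3) = 1 := Even.neg_one_pow (Nat.even_iff.mpr (by omega))
    have p5 : (-1:ℝ)^(m+5) = 1 := Even.neg_one_pow (Nat.even_iff.mpr (by omega))
    rw [e5, e3, e2, p3, p5]
    norm_num
  · have e5 : (m+5)%4 = 1 := by omega
    have e3 : (m+3)%4 = 3 := by omega
    have e2 : (m+2)%4 = 2 := by omega
    have p3 : (-1:ℝ)^(m+3) = -1 := Odd.neg_one_pow (Nat.odd_iff.mpr (by omega))
    have p5 : (-1:ℝ)^(m+5) = -1 := Odd.neg_one_pow (Nat.odd_iff.mpr (by omega))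
    rw [e5, e3, e2, p3, p5]
    norm_num
  · have e5 : (m+5)%4 = 2 := by omega
    have e3 : (m+3)%4 = 0 := by omega
    have e2 : (m+2)%4 = 3 := by omega
    have p3 : (-1:ℝ)^(m+3) = 1 := Even.neg_one_pow (Nat.even_iff.mpr (by omega))
    have p5 : (-1:ℝ)^(m+5) = 1 := Even.neg_one_pow (Nat.even_iff.mpr (by omega))
    rw [e5, e3, e2, p3, p5]
    norm_num
  · have e5 : (m+5)%4 = 3 := by omega
    have e3 : (m+3)%4 = 1 := by omega
    have e2 : (m+2)%4 = 0 := by omega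
    have p3 : (-1:ℝ)^(m+3) = -1 := Odd.neg_one_pow (Nat.odd_iff.mpr (by omega))
    have p5 : (-1:ℝ)^(m+5) = -1 := Odd.neg_one_pow (Nat.odd_iff.mpr (by omega))
    rw [e5, e3, e2, p3, p5]
    norm_num
end

section
/- For every integer n ≥ 5, C_n = C_{n-4}. -/
/-- `C m` is the determinant of the `m × m` Toeplitz band matrix whose `(i, j)`
entry is `1` if `-1 ≤ i - j ≤ 2` and `0` otherwise. -/
noncomputable def C (m : ℕ) : ℝ :=
  Matrix.det (Matrix.of fun i j : Fin m =>
    if (-1 : ℤ) ≤ ((i : ℕ) : ℤ) - ((j : ℕ) : ℤ) ∧ ((i : ℕ) : ℤ) - ((j : ℕ) : ℤ) ≤ 2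
    then (1 : ℝ) else 0)

noncomputable def pfun (t : ℕ) : ℝ :=
  if t % 4 = 0 then 1 else if t % 4 = 3 then -1 else 0

noncomputable def Nmat (n : ℕ) : Matrix (Fin (n + 1)) (Fin (n + 1)) ℝ :=
  Matrix.of fun i j => if (i : ℕ) = n then pfun (n - (j : ℕ))
    else if (j : ℕ) = (i : ℕ) + 1 then 1 else 0

noncomputable def Tmat (n : ℕ) : Matrix (Fin (n + 1)) (Fin (n + 1)) ℝ :=
  Matrix.of fun i j => if (j : ℕ) ≤ (i : ℕ) ∧ (i : ℕ) ≤ (j : ℕ) + 3 then 1 else 0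

lemma pfun_four (s : ℕ) (hs : 3 ≤ s) :
    pfun s + pfun (s - 1) + pfun (s - 2) + pfun (s - 3) = 0 := by
  have h : s % 4 = 0 ∨ s % 4 = 1 ∨ s % 4 = 2 ∨ s % 4 = 3 := by omega
  rcases h with h | h | h | h <;>
  · have h1 : (s - 1) % 4 = (s % 4 + 3) % 4 := by omega
    have h2 : (s - 2) % 4 = (s % 4 + 2) % 4 := by omega
    have h3 : (s - 3) % 4 = (s % 4 + 1) % 4 := by omega
    simp [pfun, h, h1, h2, h3]

lemma window_sum (n j : ℕ) (hj : j ≤ n) :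
    (∑ k ∈ Finset.range (n + 1),
      (if j ≤ k ∧ k ≤ j + 3 then pfun (n - k) else 0)) =
    if n ≤ j + 2 then 1 else 0 := by
  have hfilter : ∀ k ∈ Finset.range (n + 1),
      (if j ≤ k ∧ k ≤ j + 3 then pfun (n - k) else 0) =
      (if k ∈ Finset.Icc j (min (j + 3) n) then pfun (n - k) else 0) := by
    intro k hk
    simp only [Finset.mem_range] at hk
    simp only [Finset.mem_Icc]
    congr 1
    simp only [eq_iff_iff]
    omega
  rw [Finset.sum_congr rfl hfilter]
  rw [Finset.sum_ite_mem]
  have hsub : Finset.range (n + 1) ∩ Finset.Icc j (min (j + 3) n) =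
      Finset.Icc j (min (j + 3) n) := by
    apply Finset.inter_eq_right.mpr
    intro k hk
    simp only [Finset.mem_Icc] at hk
    simp only [Finset.mem_range]
    omega
  rw [hsub]
  by_cases hc : j + 3 ≤ n
  · have hmin : min (j + 3) n = j + 3 := by omega
    rw [hmin, ← Finset.Ico_add_one_right_eq_Icc, Finset.sum_Ico_eq_sum_range]
    have h4 : j + 3 + 1 - j = 4 := by omega
    rw [h4]
    have hn3 : ¬ (n ≤ j + 2) := by omega
    rw [if_neg hn3]
    simp only [Finset.sum_range_succ, Finset.sum_range_zero, zero_add]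
    have e1 : n - (j + 1) = n - j - 1 := by omega
    have e2 : n - (j + 2) = n - j - 2 := by omega
    have e3 : n - (j + 3) = n - j - 3 := by omega
    rw [e1, e2, e3]
    exact pfun_four (n - j) (by omega)
  · have hmin : min (j + 3) n = n := by omega
    rw [hmin, ← Finset.Ico_add_one_right_eq_Icc, Finset.sum_Ico_eq_sum_range]
    have hn3 : n ≤ j + 2 := by omega
    rw [if_pos hn3]
    have h : n + 1 - j = 1 ∨ n + 1 - j = 2 ∨ n + 1 - j = 3 := by omega
    rcases h with h | h | h <;> rw [h] <;>
      simp only [Finset.sum_range_succ, Finset.sum_range_zero, zero_add] <;>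
      · have e0 : n - j = n + 1 - j - 1 := by omega
        first
        | (have v0 : n - j = 0 := by omega
           simp [v0, pfun])
        | (have v0 : n - j = 1 := by omega
           have v1 : n - (j+1) = 0 := by omega
           simp [v0, v1, pfun])
        | (have v0 : n - j = 2 := by omega
           have v1 : n - (j+1) = 1 := by omega
           have v2 : n - (j+2) = 0 := by omega
           simp [v0, v1, v2, pfun])

lemma myFactorization (n : ℕ) :
    (Matrix.of fun i j : Fin (n + 1) =>
      if (-1 : ℤ) ≤ ((i : ℕ) : ℤ) - ((j : ℕ) : ℤ) ∧ ((i : ℕ) : ℤ) - ((j : ℕ) : ℤ) ≤ 2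
      then (1 : ℝ) else 0) = Nmat n * Tmat n := by
  ext i j
  rw [Matrix.mul_apply]
  by_cases hi : (i : ℕ) = n
  · have hterm : ∀ k : Fin (n + 1),
        Nmat n i k * Tmat n k j =
        (if (j : ℕ) ≤ (k : ℕ) ∧ (k : ℕ) ≤ (j : ℕ) + 3 then pfun (n - (k : ℕ)) else 0) := by
      intro k
      simp only [Nmat, Tmat, Matrix.of_apply, hi, if_pos rfl]
      split_ifs <;> simp
    rw [Finset.sum_congr rfl (fun k _ => hterm k)]
    rw [Fin.sum_univ_eq_sum_range
      (fun k => if (j : ℕ) ≤ k ∧ k ≤ (j : ℕ) + 3 then pfun (n - k) else 0)]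
    rw [window_sum n j (by omega)]
    simp only [Matrix.of_apply, hi]
    have hjn : (j : ℕ) ≤ n := by omega
    split_ifs with h1 h2 h2 <;> first | rfl | (exfalso; omega)
  · have hterm : ∀ k : Fin (n + 1),
        Nmat n i k * Tmat n k j =
        (if k = (⟨(i : ℕ) + 1, by omega⟩ : Fin (n + 1)) then Tmat n k j else 0) := by
      intro k
      simp only [Nmat, Matrix.of_apply, if_neg hi]
      have : ((k : ℕ) = (i : ℕ) + 1) ↔ k = (⟨(i : ℕ) + 1, by omega⟩ : Fin (n + 1)) := by
        rw [Fin.ext_iff]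
      split_ifs with h1 h2 h2 <;> simp_all
    rw [Finset.sum_congr rfl (fun k _ => hterm k)]
    rw [Finset.sum_ite_eq' Finset.univ _ (fun k => Tmat n k j)]
    simp only [Finset.mem_univ, if_pos, Tmat, Matrix.of_apply]
    split_ifs with h1 h2 h2 <;> first | rfl | (exfalso; push_cast at h1 h2 ⊢; omega)

lemma det_Tmat (n : ℕ) : (Tmat n).det = 1 := by
  rw [Matrix.det_of_lowerTriangular (Tmat n)]
  · have : ∀ i : Fin (n + 1), Tmat n i i = 1 := by
      intro i
      simp only [Tmat, Matrix.of_apply]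
      rw [if_pos ⟨le_refl _, by omega⟩]
    simp [this]
  · intro i j hij
    simp only [OrderDual.toDual_lt_toDual] at hij
    simp only [Tmat, Matrix.of_apply]
    rw [if_neg]
    intro h
    have : (j : ℕ) ≤ (i : ℕ) := h.1
    have : (i : ℕ) < (j : ℕ) := hij
    omega

lemma det_Nmat (n : ℕ) : (Nmat n).det = (-1) ^ n * pfun n := by
  rw [Matrix.det_succ_column_zero]
  rw [Finset.sum_eq_single (Fin.last n)]
  · have h0 : ((0 : Fin (n + 1)) : ℕ) = 0 := rfl
    have hlast : ((Fin.last n : Fin (n + 1)) : ℕ) = n := rfl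
    have hN : Nmat n (Fin.last n) 0 = pfun n := by
      simp only [Nmat, Matrix.of_apply, hlast, h0, Nat.sub_zero, if_true, eq_self_iff_true]
    rw [hN]
    have hsub : (Nmat n).submatrix (Fin.last n).succAbove Fin.succ = 1 := by
      ext a b
      simp only [Matrix.submatrix_apply, Fin.succAbove_last, Nmat, Matrix.of_apply]
      have ha : ((Fin.castSucc a : Fin (n + 1)) : ℕ) = (a : ℕ) := rfl
      have hb : ((Fin.succ b : Fin (n + 1)) : ℕ) = (b : ℕ) + 1 := rfl
      rw [ha, hb, if_neg (by omega)]
      rw [Matrix.one_apply]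
      split_ifs with h1 h2 h2 <;> first | rfl | (exfalso; rw [Fin.ext_iff] at *; omega)
    rw [hsub, Matrix.det_one, hlast]
    ring
  · intro i _ hi
    have hiv : (i : ℕ) ≠ n := by
      intro h
      exact hi (by rw [Fin.ext_iff, h]; rfl)
    have hN : Nmat n i 0 = 0 := by
      simp only [Nmat, Matrix.of_apply, if_neg hiv]
      rw [if_neg]
      have h0 : ((0 : Fin (n + 1)) : ℕ) = 0 := rfl
      omega
    rw [hN]
    ring
  · intro h
    exact absurd (Finset.mem_univ _) h

lemma C_succ (n : ℕ) : C (n + 1) = (-1) ^ n * pfun n := by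
  rw [C, myFactorization, Matrix.det_mul, det_Tmat, det_Nmat, mul_one]

theorem stmt_3 (n : ℕ) (hn : 5 ≤ n) : C n = C (n - 4) := by
  obtain ⟨k, rfl⟩ : ∃ k, n = k + 5 := ⟨n - 5, by omega⟩
  have h1 : k + 5 = (k + 4) + 1 := by omega
  have h2 : k + 5 - 4 = k + 1 := by omega
  rw [h1, h2, C_succ, C_succ]
  have hp : pfun (k + 4) = pfun k := by
    simp only [pfun]
    have : (k + 4) % 4 = k % 4 := by omega
    rw [this]
  rw [hp]
  ring_nf
end

section
/- For every integer n ≥ 4, C_n = C_{n-1} - C_{n-2} + C_{n-3}. -/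
namespace CAux

noncomputable def a (i j : ℕ) : ℝ :=
  if (-1 : ℤ) ≤ (i : ℤ) - (j : ℤ) ∧ (i : ℤ) - (j : ℤ) ≤ 2 then (1 : ℝ) else 0

lemma C_eq (m : ℕ) : C m = Matrix.det (Matrix.of fun i j : Fin m => a i j) := rfl

lemma a_zero {i j : ℕ} (h : ¬ ((-1 : ℤ) ≤ (i : ℤ) - (j : ℤ) ∧ (i : ℤ) - (j : ℤ) ≤ 2)) :
    a i j = 0 := if_neg h

lemma a_one {i j : ℕ} (h : (-1 : ℤ) ≤ (i : ℤ) - (j : ℤ) ∧ (i : ℤ) - (j : ℤ) ≤ 2) :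
    a i j = 1 := if_pos h

/-- det of the shifted band matrix. -/
lemma det_shift (m r : ℕ) :
    Matrix.det (Matrix.of fun i j : Fin m => a (i + r) (j + r)) = C m := by
  rw [C_eq]
  congr 1
  ext i j
  simp only [Matrix.of_apply, a]
  congr 1
  rw [show (((i : ℕ) + r : ℕ) : ℤ) - (((j : ℕ) + r : ℕ) : ℤ)
      = ((i : ℕ) : ℤ) - ((j : ℕ) : ℤ) by push_cast; ring]

lemma succAbove_one_val {m : ℕ} (j : Fin (m + 2)) :
    (((1 : Fin (m + 3)).succAbove j) : ℕ) = if (j : ℕ) < 1 then (j : ℕ) else (j : ℕ) + 1 := by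
  rcases lt_or_ge (j.castSucc) (1 : Fin (m+3)) with h | h
  · rw [Fin.succAbove_of_castSucc_lt _ _ h]
    simp only [Fin.coe_castSucc]
    rw [if_pos]
    have := Fin.lt_def.mp h
    simpa using this
  · rw [Fin.succAbove_of_le_castSucc _ _ h]
    simp only [Fin.val_succ]
    rw [if_neg]
    have h' := Fin.le_def.mp h
    simp only [Fin.coe_castSucc, Fin.val_one] at h'
    omega

lemma key (k : ℕ) : C (k + 4) = C (k + 3) - C (k + 2) + C (k + 1) := by
  -- Step 1: expand along row 0.
  rw [C_eq (k+4)]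
  rw [show (k + 4) = (k + 3) + 1 from rfl]
  rw [Matrix.det_succ_row_zero]
  rw [Fin.sum_univ_succ]
  rw [show ((k:ℕ) + 3) = (k + 2) + 1 from rfl]
  rw [Fin.sum_univ_succ]
  have htail : ∀ i : Fin (k + 2),
      (-1) ^ ((i.succ.succ : Fin (k + 3 + 1)) : ℕ) *
          (Matrix.of fun i j : Fin (k + 3 + 1) => a i j) 0 i.succ.succ *
          ((Matrix.of fun i j : Fin (k + 3 + 1) => a i j).submatrix Fin.succ
            i.succ.succ.succAbove).det = 0 := by
    intro i
    have h0 : (Matrix.of fun i j : Fin (k + 3 + 1) => a i j) 0 i.succ.succ = 0 := by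
      simp only [Matrix.of_apply, Fin.val_zero, Fin.val_succ]
      apply a_zero
      push_cast
      omega
    rw [h0]; ring
  rw [Finset.sum_congr rfl (fun i _ => htail i), Finset.sum_const, smul_zero]
  have h00 : a 0 0 = 1 := a_one (by norm_num)
  have h01 : a (0 : Fin (k+3+1)) ((Fin.succ (0 : Fin (k+2+1))) : ℕ) = 1 := by
    simp only [Fin.succ_zero_eq_one, Fin.val_one]
    exact a_one (by norm_num)
  have hM0 : ((Matrix.of fun i j : Fin (k + 3 + 1) => a i j).submatrix Fin.succ
      (Fin.succAbove 0)).det = C (k + 3) := by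
    rw [← det_shift (k + 3) 1]
    congr 1
  have hM1 : ((Matrix.of fun i j : Fin (k + 3 + 1) => a i j).submatrix Fin.succ
      (Fin.succ (0 : Fin (k + 2 + 1))).succAbove).det = C (k + 2) - C (k + 1) := by
    have hM1' : ((Matrix.of fun i j : Fin (k + 3 + 1) => a i j).submatrix Fin.succ
        (Fin.succ (0 : Fin (k + 2 + 1))).succAbove)
        = Matrix.of (fun i j : Fin (k + 2 + 1) =>
            a ((i : ℕ) + 1) (if (j : ℕ) < 1 then (j : ℕ) else (j : ℕ) + 1)) := by
      ext i j
      simp only [Matrix.submatrix_apply, Matrix.of_apply, Fin.val_succ, Fin.succ_zero_eq_one]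
      rw [succAbove_one_val]
    rw [hM1']
    rw [Matrix.det_succ_column_zero]
    rw [Fin.sum_univ_succ]
    rw [show ((k : ℕ) + 2) = (k + 1) + 1 from rfl]
    rw [Fin.sum_univ_succ]
    have htail2 : ∀ i : Fin (k + 1),
        (-1) ^ ((i.succ.succ : Fin (k + 2 + 1)) : ℕ) *
            (Matrix.of (fun i j : Fin (k + 2 + 1) =>
              a ((i : ℕ) + 1) (if (j : ℕ) < 1 then (j : ℕ) else (j : ℕ) + 1))) i.succ.succ 0 *
            ((Matrix.of (fun i j : Fin (k + 2 + 1) =>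
              a ((i : ℕ) + 1) (if (j : ℕ) < 1 then (j : ℕ) else (j : ℕ) + 1))).submatrix
              i.succ.succ.succAbove Fin.succ).det = 0 := by
      intro i
      have h0 : (Matrix.of (fun i j : Fin (k + 2 + 1) =>
          a ((i : ℕ) + 1) (if (j : ℕ) < 1 then (j : ℕ) else (j : ℕ) + 1))) i.succ.succ 0 = 0 := by
        simp only [Matrix.of_apply, Fin.val_zero, Fin.val_succ, if_pos (by norm_num : (0:ℕ) < 1)]
        apply a_zero
        push_cast
        omega
      rw [h0]; ring
    rw [Finset.sum_congr rfl (fun i _ => htail2 i), Finset.sum_const, smul_zero]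
    have ha10 : a ((0 : Fin (k+2+1)) + 1 : ℕ) 0 = 1 := by
      exact a_one (by norm_num)
    have ha20 : a (((Fin.succ (0 : Fin (k+1+1))) : ℕ) + 1) 0 = 1 := by
      simp only [Fin.succ_zero_eq_one, Fin.val_one]
      exact a_one (by norm_num)
    have hN0 : ((Matrix.of (fun i j : Fin (k + 2 + 1) =>
        a ((i : ℕ) + 1) (if (j : ℕ) < 1 then (j : ℕ) else (j : ℕ) + 1))).submatrix
        (Fin.succAbove 0) Fin.succ).det = C (k + 2) := by
      rw [← det_shift (k + 2) 2]
      congr 1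
    have hN1 : ((Matrix.of (fun i j : Fin (k + 2 + 1) =>
        a ((i : ℕ) + 1) (if (j : ℕ) < 1 then (j : ℕ) else (j : ℕ) + 1))).submatrix
        (Fin.succ (0 : Fin (k + 1 + 1))).succAbove Fin.succ).det = C (k + 1) := by
      have hN1' : ((Matrix.of (fun i j : Fin (k + 2 + 1) =>
          a ((i : ℕ) + 1) (if (j : ℕ) < 1 then (j : ℕ) else (j : ℕ) + 1))).submatrix
          (Fin.succ (0 : Fin (k + 1 + 1))).succAbove Fin.succ)
          = Matrix.of (fun i j : Fin (k + 1 + 1) =>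
              a ((if (i : ℕ) < 1 then (i : ℕ) else (i : ℕ) + 1) + 1) ((j : ℕ) + 2)) := by
        ext i j
        simp only [Matrix.submatrix_apply, Matrix.of_apply, Fin.val_succ, Fin.succ_zero_eq_one]
        rw [succAbove_one_val]
        rw [if_neg (by omega : ¬ ((j : ℕ) + 1 < 1))]
      rw [hN1']
      rw [Matrix.det_succ_row_zero]
      rw [Fin.sum_univ_succ]
      have htail3 : ∀ j : Fin (k + 1),
          (-1) ^ ((j.succ : Fin (k + 1 + 1)) : ℕ) *
              (Matrix.of (fun i j : Fin (k + 1 + 1) =>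
                a ((if (i : ℕ) < 1 then (i : ℕ) else (i : ℕ) + 1) + 1) ((j : ℕ) + 2))) 0 j.succ *
              ((Matrix.of (fun i j : Fin (k + 1 + 1) =>
                a ((if (i : ℕ) < 1 then (i : ℕ) else (i : ℕ) + 1) + 1) ((j : ℕ) + 2))).submatrix
                Fin.succ j.succ.succAbove).det = 0 := by
        intro j
        have h0 : (Matrix.of (fun i j : Fin (k + 1 + 1) =>
            a ((if (i : ℕ) < 1 then (i : ℕ) else (i : ℕ) + 1) + 1) ((j : ℕ) + 2))) 0 j.succ = 0 := by
          simp only [Matrix.of_apply, Fin.val_zero, Fin.val_succ, if_pos (by norm_num : (0:ℕ) < 1)]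
          apply a_zero
          push_cast
          omega
        rw [h0]; ring
      rw [Finset.sum_congr rfl (fun j _ => htail3 j), Finset.sum_const, smul_zero]
      have ha12 : a ((if ((0 : Fin (k+1+1)) : ℕ) < 1 then ((0 : Fin (k+1+1)) : ℕ)
          else ((0 : Fin (k+1+1)) : ℕ) + 1) + 1) (((0 : Fin (k+1+1)) : ℕ) + 2) = 1 := by
        simp only [Fin.val_zero, if_pos (by norm_num : (0:ℕ) < 1)]
        exact a_one (by norm_num)
      have hP : ((Matrix.of (fun i j : Fin (k + 1 + 1) =>
          a ((if (i : ℕ) < 1 then (i : ℕ) else (i : ℕ) + 1) + 1) ((j : ℕ) + 2))).submatrix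
          Fin.succ (Fin.succAbove 0)).det = C (k + 1) := by
        rw [← det_shift (k + 1) 3]
        congr 1
      simp only [Matrix.of_apply] at *
      rw [hP]
      norm_num [a]
    simp only [Matrix.of_apply] at *
    rw [hN0, hN1]
    norm_num [a, Fin.succ_zero_eq_one]
    ring
  simp only [Matrix.of_apply] at *
  rw [hM0, hM1]
  norm_num [a, Fin.succ_zero_eq_one]
  ring

end CAux

theorem stmt_4 (n : ℕ) (hn : 4 ≤ n) : C n = C (n - 1) - C (n - 2) + C (n - 3) := by
  obtain ⟨k, rfl⟩ : ∃ k, n = k + 4 := ⟨n - 4, by omega⟩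
  have := CAux.key k
  simpa [show k + 4 - 1 = k + 3 by omega, show k + 4 - 2 = k + 2 by omega,
    show k + 4 - 3 = k + 1 by omega] using this
end

section
/- For every integer n ≥ 1, C_n = 1 if n ≡ 0 (mod 4) or n ≡ 1 (mod 4), and C_n = 0 if n ≡ 2 (mod 4) or n ≡ 3 (mod 4). -/
namespace Stmt5Aux

def cc (x : ℕ) : ℝ := if x % 4 = 2 ∨ x % 4 = 3 then 1 else 0
def sg (x : ℕ) : ℝ := if x % 2 = 0 then 1 else -1
def ww (x : ℕ) : ℝ := if x % 4 = 1 then 1 else if x % 4 = 3 then -1 else 0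
def bb (n x : ℕ) : ℝ := sg x * (cc x - cc n)

lemma bb_add (n k : ℕ) : bb n k + bb n (k + 1) = ww k := by
  unfold bb ww sg cc
  split_ifs <;> first | (exfalso; omega) | norm_num

lemma bb_last (n k : ℕ) (h : k + 1 = n) : bb n k = ww k := by
  unfold bb ww sg cc
  split_ifs <;> first | (exfalso; omega) | norm_num

variable (n : ℕ)

noncomputable def Mm : Matrix (Fin n) (Fin n) ℝ :=
  Matrix.of fun i j : Fin n =>
    if (-1 : ℤ) ≤ ((i : ℕ) : ℤ) - ((j : ℕ) : ℤ) ∧ ((i : ℕ) : ℤ) - ((j : ℕ) : ℤ) ≤ 2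
    then (1 : ℝ) else 0

noncomputable def Um : Matrix (Fin n) (Fin n) ℝ :=
  Matrix.of fun i j : Fin n =>
    (if (j : ℕ) = (i : ℕ) then (1:ℝ) else 0) + (if (j : ℕ) = (i : ℕ) + 1 then 1 else 0)

noncomputable def Sm : Matrix (Fin n) (Fin n) ℝ :=
  Matrix.of fun i j : Fin n =>
    (if (j : ℕ) = (i : ℕ) then (1:ℝ) else 0) + (if (j : ℕ) + 2 = (i : ℕ) then 1 else 0)

noncomputable def Tm : Matrix (Fin n) (Fin n) ℝ :=
  Matrix.of fun i j : Fin n =>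
    (if (j : ℕ) = (i : ℕ) then (1:ℝ) else 0) + (if (j : ℕ) = 0 then bb n i else 0)

noncomputable def Wm : Matrix (Fin n) (Fin n) ℝ :=
  Matrix.of fun i j : Fin n =>
    Um n i j + (if (j : ℕ) = 0 then ww i else 0)

lemma sum_ind (m : ℕ) (g : Fin n → ℝ) :
    (∑ k : Fin n, (if (k : ℕ) = m then (1:ℝ) else 0) * g k) =
      if h : m < n then g ⟨m, h⟩ else 0 := by
  split_ifs with h
  · rw [Finset.sum_eq_single (⟨m, h⟩ : Fin n)]
    · simp
    · intro k _ hk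
      have hkm : (k : ℕ) ≠ m := fun hkm => hk (Fin.ext hkm)
      simp [hkm]
    · simp
  · refine Finset.sum_eq_zero fun k _ => ?_
    have hkm : (k : ℕ) ≠ m := by have := k.isLt; omega
    simp [hkm]

lemma sum_ind2 (m : ℕ) (g : Fin n → ℝ) :
    (∑ k : Fin n, (if (k : ℕ) + 2 = m then (1:ℝ) else 0) * g k) =
      if h : m - 2 < n ∧ 2 ≤ m then g ⟨m - 2, h.1⟩ else 0 := by
  split_ifs with h
  · rw [Finset.sum_eq_single (⟨m - 2, h.1⟩ : Fin n)]
    · have h2 : (m - 2 : ℕ) + 2 = m := by omega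
      simp [h2]
    · intro k _ hk
      have hkm : (k : ℕ) + 2 ≠ m := by
        intro hkm
        apply hk
        apply Fin.ext
        show (k : ℕ) = m - 2
        omega
      simp [hkm]
    · simp
  · refine Finset.sum_eq_zero fun k _ => ?_
    have hkm : (k : ℕ) + 2 ≠ m := by have := k.isLt; omega
    simp [hkm]

lemma hUT : Um n * Tm n = Wm n := by
  ext i j
  have hi := i.isLt
  have hj := j.isLt
  rw [Matrix.mul_apply]
  simp only [Um, Matrix.of_apply, add_mul]
  rw [Finset.sum_add_distrib, sum_ind, sum_ind, dif_pos hi]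
  simp only [Fin.eta]
  by_cases h1 : (i : ℕ) + 1 < n
  · rw [dif_pos h1]
    have hadd := bb_add n (i : ℕ)
    simp only [Wm, Um, Tm, Matrix.of_apply, Fin.val_mk]
    split_ifs <;> first | (exfalso; omega) | linarith
  · rw [dif_neg h1]
    have hlast := bb_last n (i : ℕ) (by omega)
    simp only [Wm, Um, Tm, Matrix.of_apply]
    split_ifs <;> first | (exfalso; omega) | linarith

lemma hSW : Sm n * Wm n = Mm n := by
  ext i j
  have hi := i.isLt
  have hj := j.isLt
  rw [Matrix.mul_apply]
  simp only [Sm, Matrix.of_apply, add_mul]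
  rw [Finset.sum_add_distrib, sum_ind, sum_ind2, dif_pos hi]
  simp only [Fin.eta]
  by_cases h2 : (i : ℕ) - 2 < n ∧ 2 ≤ (i : ℕ)
  · rw [dif_pos h2]
    simp only [Mm, Wm, Um, Matrix.of_apply, Fin.val_mk, ww]
    by_cases hj0 : (j : ℕ) = 0
    · split_ifs <;> first | (exfalso; omega) | norm_num
    · split_ifs <;> first | (exfalso; omega) | norm_num
  · rw [dif_neg h2]
    simp only [Mm, Wm, Um, Matrix.of_apply, ww]
    split_ifs <;> first | (exfalso; omega) | norm_num

lemma detU : (Um n).det = 1 := by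
  rw [Matrix.det_of_upperTriangular]
  · refine Finset.prod_eq_one fun i _ => ?_
    simp [Um]
  · intro i j hji
    have hlt : (j : ℕ) < (i : ℕ) := hji
    have h1 : (j : ℕ) ≠ (i : ℕ) := by omega
    have h2 : (j : ℕ) ≠ (i : ℕ) + 1 := by omega
    simp [Um, h1, h2]

lemma detS : (Sm n).det = 1 := by
  rw [Matrix.det_of_lowerTriangular]
  · refine Finset.prod_eq_one fun i _ => ?_
    have h2 : (i : ℕ) + 2 ≠ (i : ℕ) := by omega
    simp [Sm, h2]
  · intro i j hij
    have hlt : (i : ℕ) < (j : ℕ) := hij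
    have h1 : (j : ℕ) ≠ (i : ℕ) := by omega
    have h2 : (j : ℕ) + 2 ≠ (i : ℕ) := by omega
    simp [Sm, h1, h2]

lemma detT (hn : 0 < n) : (Tm n).det = 1 + bb n 0 := by
  rw [Matrix.det_of_lowerTriangular]
  · rw [Finset.prod_eq_single (⟨0, hn⟩ : Fin n)]
    · simp [Tm]
    · intro k _ hk
      have h0 : (k : ℕ) ≠ 0 := fun h => hk (Fin.ext h)
      simp [Tm, h0]
    · simp
  · intro i j hij
    have hlt : (i : ℕ) < (j : ℕ) := hij
    have h1 : (j : ℕ) ≠ (i : ℕ) := by omega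
    have h2 : (j : ℕ) ≠ 0 := by omega
    simp [Tm, h1, h2]

lemma detM (hn : 0 < n) : (Mm n).det = 1 - cc n := by
  have hfac : Mm n = Sm n * (Um n * Tm n) := by rw [hUT, hSW]
  rw [hfac, Matrix.det_mul, Matrix.det_mul, detS, detU, detT n hn]
  have h0 : bb n 0 = -cc n := by
    have hc : cc 0 = 0 := by norm_num [cc]
    have hs : sg 0 = 1 := by norm_num [sg]
    rw [bb, hc, hs]; ring
  rw [h0]; ring

end Stmt5Aux

theorem stmt_5 (n : ℕ) (hn : 1 ≤ n) :
    ((n % 4 = 0 ∨ n % 4 = 1) → C n = 1) ∧ ((n % 4 = 2 ∨ n % 4 = 3) → C n = 0) := by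
  have hC : C n = 1 - Stmt5Aux.cc n := Stmt5Aux.detM n hn
  constructor
  · rintro (h | h) <;>
    · rw [hC, Stmt5Aux.cc, if_neg (by omega)]; ring
  · rintro (h | h) <;>
    · rw [hC, Stmt5Aux.cc, if_pos (by omega)]; ring
end

section
/- Let n ≥ 4 and let A_n be the determinant of the n×n matrix whose (i,j) entry equals 1 if -1 ≤ i-j ≤ 2, equals 1 if (i,j) = (1,n), and equals 0 otherwise. Then A_n = C_n + (-1)^{n+1} C_{n-1}. -/
/-- `A n` is the band determinant with an extra `1` at the `(1, n)` corner. -/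
theorem stmt_6 (n : ℕ) (hn : 4 ≤ n)
    (A : ℝ)
    (hA : A = Matrix.det (Matrix.of fun i j : Fin n =>
      if ((-1 : ℤ) ≤ ((i : ℕ) : ℤ) - ((j : ℕ) : ℤ) ∧ ((i : ℕ) : ℤ) - ((j : ℕ) : ℤ) ≤ 2)
          ∨ ((i : ℕ) = 0 ∧ (j : ℕ) = n - 1)
      then (1 : ℝ) else 0)) :
    A = C n + (-1 : ℝ) ^ (n + 1) * C (n - 1) := by
  obtain ⟨m, rfl⟩ : ∃ m, n = m + 1 := ⟨n - 1, by omega⟩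
  have hm : 3 ≤ m := by omega
  set B : Matrix (Fin (m+1)) (Fin (m+1)) ℝ := Matrix.of fun i j : Fin (m+1) =>
    if (-1 : ℤ) ≤ ((i : ℕ) : ℤ) - ((j : ℕ) : ℤ) ∧ ((i : ℕ) : ℤ) - ((j : ℕ) : ℤ) ≤ 2
    then (1 : ℝ) else 0 with hB
  set v : Fin (m+1) → ℝ := Pi.single (Fin.last m) (1 : ℝ) with hv
  have hM : (Matrix.of fun i j : Fin (m+1) =>
      if ((-1 : ℤ) ≤ ((i : ℕ) : ℤ) - ((j : ℕ) : ℤ) ∧ ((i : ℕ) : ℤ) - ((j : ℕ) : ℤ) ≤ 2)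
          ∨ ((i : ℕ) = 0 ∧ (j : ℕ) = m + 1 - 1)
      then (1 : ℝ) else 0) = B.updateRow 0 (B 0 + v) := by
    ext i j
    by_cases hi : i = 0
    · subst hi
      rw [Matrix.updateRow_self]
      simp only [hB, hv, Matrix.of_apply, Pi.add_apply, Pi.single_apply]
      have hj : (j = Fin.last m) ↔ ((j : ℕ) = m + 1 - 1) := by
        constructor
        · rintro rfl; simp
        · intro h; exact Fin.ext (by simpa using h)
      by_cases h1 : (j : ℕ) = m + 1 - 1
      · have hj2 : j = Fin.last m := hj.2 h1
        have hband : ¬ ((-1 : ℤ) ≤ ((0:Fin (m+1)) : ℕ) - ((j : ℕ) : ℤ) ∧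
            (((0:Fin (m+1)) : ℕ) : ℤ) - ((j : ℕ) : ℤ) ≤ 2) := by
          simp only [Fin.val_zero, Nat.cast_zero]
          omega
        simp only [h1, hj2, hband, and_true, false_or, if_true, if_false,
          Pi.single_apply, if_pos rfl]
        norm_num
        omega
      · have hj2 : ¬ j = Fin.last m := fun h => h1 (hj.1 h)
        have h1' : ¬ ((j : ℕ) = m) := by omega
        simp [h1, h1', hj2]
    · rw [Matrix.updateRow_ne hi]
      have hi' : (i : ℕ) ≠ 0 := fun h => hi (Fin.ext h)
      simp only [hB, Matrix.of_apply]
      have : (((-1 : ℤ) ≤ ((i : ℕ) : ℤ) - ((j : ℕ) : ℤ) ∧ ((i : ℕ) : ℤ) - ((j : ℕ) : ℤ) ≤ 2)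
          ∨ ((i : ℕ) = 0 ∧ (j : ℕ) = m + 1 - 1)) ↔
          ((-1 : ℤ) ≤ ((i : ℕ) : ℤ) - ((j : ℕ) : ℤ) ∧ ((i : ℕ) : ℤ) - ((j : ℕ) : ℤ) ≤ 2) := by
        constructor
        · rintro (h | ⟨h0, _⟩)
          · exact h
          · exact absurd h0 hi'
        · exact Or.inl
      rw [if_congr this rfl rfl]
  rw [hM] at hA
  rw [Matrix.det_updateRow_add, Matrix.updateRow_eq_self] at hA
  have hCn : B.det = C (m+1) := rfl
  -- compute the second determinant
  have hdet2 : (B.updateRow 0 v).det = (-1 : ℝ) ^ (m + 1 + 1) * C (m + 1 - 1) := by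
    rw [Matrix.det_succ_row_zero]
    rw [Finset.sum_eq_single (Fin.last m)]
    · have hvl : (B.updateRow 0 v) 0 (Fin.last m) = 1 := by
        rw [Matrix.updateRow_self]; simp [hv]
      rw [hvl]
      have hsub : ((B.updateRow 0 v).submatrix Fin.succ (Fin.last m).succAbove) =
          (Matrix.of fun i j : Fin m =>
            if (-1 : ℤ) ≤ ((i : ℕ) : ℤ) - ((j : ℕ) : ℤ) ∧ ((i : ℕ) : ℤ) - ((j : ℕ) : ℤ) ≤ 2
            then (1 : ℝ) else 0).transpose := by
        ext i j
        rw [Matrix.submatrix_apply, Fin.succAbove_last, Matrix.updateRow_ne (Fin.succ_ne_zero i)]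
        simp only [hB, Matrix.of_apply, Matrix.transpose_apply, Fin.val_succ,
          Fin.coe_castSucc]
        have : ((-1 : ℤ) ≤ ((i : ℕ) + 1 : ℕ) - ((j : ℕ) : ℤ) ∧
            (((i : ℕ) + 1 : ℕ) : ℤ) - ((j : ℕ) : ℤ) ≤ 2) ↔
            ((-1 : ℤ) ≤ ((j : ℕ) : ℤ) - ((i : ℕ) : ℤ) ∧ ((j : ℕ) : ℤ) - ((i : ℕ) : ℤ) ≤ 2) := by
          push_cast; omega
        rw [if_congr this rfl rfl]
      rw [hsub, Matrix.det_transpose]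
      have h2 : C (m + 1 - 1) = C m := rfl
      have h3 : ((-1:ℝ)) ^ (m + 1 + 1) = (-1:ℝ) ^ m := by
        rw [show m + 1 + 1 = m + 2 from rfl, pow_add]; norm_num
      rw [h2, h3, Fin.val_last, C]
      ring
    · intro j _ hj
      have : (B.updateRow 0 v) 0 j = 0 := by
        rw [Matrix.updateRow_self]; simp [hv, Pi.single_apply, hj]
      rw [this]; ring
    · intro h; exact absurd (Finset.mem_univ _) h
  rw [hdet2, hCn] at hA
  exact hA
end

section
/- Let a be a real number, let n ≥ 5, and let G_n be the determinant of the n×n matrix whose first row is 1 in columns 1 and 2, a in column n, and 0 elsewhere, and whose (i,j) entry for i ≥ 2 equals 1 if -2 ≤ i-j ≤ 1 and 0 otherwise. Then G_n = C_{n-1} - C_{n-2} + a(-1)^{n+1}. -/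
lemma bandDet (m : ℕ) :
    Matrix.det (Matrix.of fun i j : Fin m =>
      if (-2 : ℤ) ≤ ((i : ℕ) : ℤ) - ((j : ℕ) : ℤ) ∧ ((i : ℕ) : ℤ) - ((j : ℕ) : ℤ) ≤ 1
      then (1 : ℝ) else 0) = C m := by
  rw [C, ← Matrix.det_transpose]
  congr 1
  ext i j
  simp only [Matrix.transpose_apply, Matrix.of_apply]
  congr 1
  simp only [eq_iff_iff]
  omega

lemma triDet (m : ℕ) :
    Matrix.det (Matrix.of fun i j : Fin m =>
      if (-3 : ℤ) ≤ ((i : ℕ) : ℤ) - ((j : ℕ) : ℤ) ∧ ((i : ℕ) : ℤ) - ((j : ℕ) : ℤ) ≤ 0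
      then (1 : ℝ) else 0) = 1 := by
  rw [Matrix.det_of_upperTriangular]
  · rw [Finset.prod_eq_one]
    intro i _
    simp
  · intro i j hij
    simp only [id] at hij
    rw [Matrix.of_apply, if_neg]
    omega

/-- `G n`: the first row is `1` in columns `1` and `2`, `a` in column `n`, and
`0` elsewhere; rows `i ≥ 2` have entry `1` exactly when `-2 ≤ i - j ≤ 1`. -/
theorem stmt_10 (a : ℝ) (n : ℕ) (hn : 5 ≤ n)
    (G : ℝ)
    (hG : G = Matrix.det (Matrix.of fun i j : Fin n =>
      if (i : ℕ) = 0 then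
        (if (j : ℕ) = 0 ∨ (j : ℕ) = 1 then (1 : ℝ) else if (j : ℕ) = n - 1 then a else 0)
      else if (-2 : ℤ) ≤ ((i : ℕ) : ℤ) - ((j : ℕ) : ℤ) ∧ ((i : ℕ) : ℤ) - ((j : ℕ) : ℤ) ≤ 1
      then (1 : ℝ) else 0)) :
    G = C (n - 1) - C (n - 2) + a * (-1 : ℝ) ^ (n + 1) := by
  obtain ⟨p, rfl⟩ : ∃ p, n = p + 2 := ⟨n - 2, by omega⟩
  have hp : 3 ≤ p := by omega
  subst hG
  set M : Matrix (Fin (p + 2)) (Fin (p + 2)) ℝ := Matrix.of (fun i j : Fin (p + 2) =>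
      if (i : ℕ) = 0 then
        (if (j : ℕ) = 0 ∨ (j : ℕ) = 1 then (1 : ℝ) else if (j : ℕ) = p + 2 - 1 then a else 0)
      else if (-2 : ℤ) ≤ ((i : ℕ) : ℤ) - ((j : ℕ) : ℤ) ∧ ((i : ℕ) : ℤ) - ((j : ℕ) : ℤ) ≤ 1
      then (1 : ℝ) else 0) with hM
  rw [Matrix.det_succ_row_zero]
  rw [← Finset.sum_subset (Finset.subset_univ ({0, 1, Fin.last (p + 1)} : Finset (Fin (p + 2))))
    (fun j _ hj => by
      simp only [Finset.mem_insert, Finset.mem_singleton, not_or] at hj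
      obtain ⟨h0, h1, h2⟩ := hj
      have v0 : (j : ℕ) ≠ 0 := fun h => h0 (Fin.ext (by simpa using h))
      have v1 : (j : ℕ) ≠ 1 := fun h => h1 (Fin.ext (by simpa using h))
      have v2 : (j : ℕ) ≠ p + 1 := fun h => h2 (Fin.ext (by simpa using h))
      have : M 0 j = 0 := by
        simp only [hM, Matrix.of_apply, Fin.val_zero]
        rw [if_pos trivial, if_neg (by omega), if_neg (by omega)]
      rw [this, mul_zero, zero_mul])]
  have hne01 : (0 : Fin (p + 2)) ≠ 1 := by simp [Fin.ext_iff]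
  have hne0l : (0 : Fin (p + 2)) ≠ Fin.last (p + 1) := by
    simp only [ne_eq, Fin.ext_iff, Fin.val_zero, Fin.val_last]
    omega
  have hne1l : (1 : Fin (p + 2)) ≠ Fin.last (p + 1) :=
    Fin.ne_of_val_ne (by simp only [Fin.val_one, Fin.val_last]; omega)
  rw [Finset.sum_insert (by simp [hne01, hne0l]),
      Finset.sum_insert (by simp [hne1l]), Finset.sum_singleton]
  -- entries of the first row
  have e0 : M 0 0 = 1 := by rw [hM, Matrix.of_apply]; norm_num
  have e1 : M 0 1 = 1 := by
    rw [hM, Matrix.of_apply]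
    have : ((1 : Fin (p + 2)) : ℕ) = 1 := rfl
    norm_num [this]
  have el : M 0 (Fin.last (p + 1)) = a := by
    simp only [hM, Matrix.of_apply, Fin.val_zero, Fin.val_last]
    rw [if_pos trivial, if_neg (by omega), if_pos (by omega)]
  -- minor at column 0
  have d0 : Matrix.det (M.submatrix Fin.succ (Fin.succAbove 0)) = C (p + 1) := by
    rw [← bandDet (p + 1)]
    congr 1
    ext i j
    simp only [Matrix.submatrix_apply, Fin.zero_succAbove, hM, Matrix.of_apply, Fin.val_succ]
    rw [if_neg (by omega)]
    congr 1
    simp only [eq_iff_iff]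
    push_cast
    omega
  -- minor at column (last)
  have dl : Matrix.det (M.submatrix Fin.succ (Fin.succAbove (Fin.last (p + 1)))) = 1 := by
    rw [← triDet (p + 1)]
    congr 1
    ext i j
    simp only [Matrix.submatrix_apply, Fin.succAbove_last, hM, Matrix.of_apply, Fin.val_succ,
      Fin.coe_castSucc]
    rw [if_neg (by omega)]
    congr 1
    simp only [eq_iff_iff]
    push_cast
    omega
  -- minor at column 1
  have d1 : Matrix.det (M.submatrix Fin.succ (Fin.succAbove 1)) = C p := by
    rw [Matrix.det_succ_column_zero]
    rw [Finset.sum_eq_single (0 : Fin (p + 1)) ?_ (by simp)]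
    · have hcol : (M.submatrix Fin.succ (Fin.succAbove 1)) 0 0 = 1 := by
        have h10 : (1 : Fin (p + 2)).succAbove 0 = 0 := by
          ext; simp [Fin.succAbove]
        simp only [Matrix.submatrix_apply, h10, hM, Matrix.of_apply, Fin.val_succ,
          Fin.val_zero]
        rw [if_neg (by omega)]
        exact if_pos (by norm_num)
      rw [hcol]
      have : ((M.submatrix Fin.succ (Fin.succAbove 1)).submatrix
          (Fin.succAbove 0) Fin.succ) = Matrix.of (fun i j : Fin p =>
          if (-2 : ℤ) ≤ ((i : ℕ) : ℤ) - ((j : ℕ) : ℤ) ∧ ((i : ℕ) : ℤ) - ((j : ℕ) : ℤ) ≤ 1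
          then (1 : ℝ) else 0) := by
        ext i j
        simp only [Matrix.submatrix_apply, Fin.zero_succAbove, Fin.one_succAbove_succ,
          hM, Matrix.of_apply, Fin.val_succ]
        rw [if_neg (by omega)]
        congr 1
        simp only [eq_iff_iff]
        push_cast
        omega
      rw [this, bandDet]
      norm_num
    · intro i _ hi
      have : (M.submatrix Fin.succ (Fin.succAbove 1)) i 0 = 0 := by
        have h10 : (1 : Fin (p + 2)).succAbove 0 = 0 := by
          ext; simp [Fin.succAbove]
        have hiv : 1 ≤ (i : ℕ) := by
          rcases Nat.eq_zero_or_pos (i : ℕ) with h | h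
          · exact absurd (Fin.ext h) hi
          · exact h
        simp only [Matrix.submatrix_apply, h10, hM, Matrix.of_apply, Fin.val_succ,
          Fin.val_zero]
        rw [if_neg (by omega)]
        exact if_neg (by push_cast; omega)
      rw [this, mul_zero, zero_mul]
  rw [e0, e1, el, d0, d1, dl, Fin.val_last]
  have : ((0 : Fin (p+2)) : ℕ) = 0 := rfl
  have h1v : ((1 : Fin (p+2)) : ℕ) = 1 := rfl
  rw [this, h1v]
  have : p + 2 - 1 = p + 1 := rfl
  rw [this]
  have : p + 2 - 2 = p := rfl
  rw [this]
  have : (-1 : ℝ) ^ (p + 2 + 1) = (-1) ^ (p + 1) := by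
    rw [show p + 2 + 1 = (p + 1) + 2 from rfl, pow_add]
    norm_num
  rw [this]
  ring
end

section
/- Let a be a real number, let n ≥ 5, and let P_n be the determinant of the n×n matrix whose (i,j) entry equals 1 if -1 ≤ i-j ≤ 2, equals a if (i,j) = (1,n), and equals 0 otherwise. Then P_n = C_{n-1}(1 + a(-1)^{n+1}) - C_{n-2} + C_{n-3}. -/
noncomputable def bmat (m : ℕ) : Matrix (Fin m) (Fin m) ℝ :=
  Matrix.of fun i j : Fin m =>
    if (-1 : ℤ) ≤ ((i : ℕ) : ℤ) - ((j : ℕ) : ℤ) ∧ ((i : ℕ) : ℤ) - ((j : ℕ) : ℤ) ≤ 2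
    then (1 : ℝ) else 0

-- the "Q" matrix: minor of band along (row 1, col 2)
noncomputable def qmat (m : ℕ) : Matrix (Fin (m+3)) (Fin (m+3)) ℝ :=
  Matrix.of fun i j =>
    if (-1 : ℤ) ≤ ((i : ℕ) : ℤ) + 1 - (if (j:ℕ) < 1 then ((j:ℕ):ℤ) else ((j:ℕ):ℤ)+1)
       ∧ ((i : ℕ) : ℤ) + 1 - (if (j:ℕ) < 1 then ((j:ℕ):ℤ) else ((j:ℕ):ℤ)+1) ≤ 2
    then (1 : ℝ) else 0

lemma qmat_det (m : ℕ) : (qmat m).det = (bmat (m+2)).det - (bmat (m+1)).det := by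
  rw [Matrix.det_succ_column_zero, Fin.sum_univ_succ, Fin.sum_univ_succ]
  have htail : ∀ i : Fin (m+1), (-1:ℝ) ^ ((i.succ.succ : Fin (m+3)) : ℕ) * qmat m i.succ.succ 0
      * Matrix.det ((qmat m).submatrix i.succ.succ.succAbove Fin.succ) = 0 := by
    intro i
    have : qmat m i.succ.succ 0 = 0 := by
      simp only [qmat, Matrix.of_apply, Fin.val_succ, Fin.val_zero]
      apply if_neg
      push_cast
      omega
    rw [this]; ring
  rw [Finset.sum_congr rfl (fun i _ => htail i), Finset.sum_const_zero, add_zero]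
  have h00 : qmat m 0 0 = 1 := by
    simp only [qmat, Matrix.of_apply, Fin.val_zero]
    norm_num
  have h10 : qmat m (0:Fin (m+2)).succ 0 = 1 := by
    simp only [qmat, Matrix.of_apply, Fin.val_succ, Fin.val_zero]
    norm_num
  have hsub0 : (qmat m).submatrix (0 : Fin (m+3)).succAbove Fin.succ = bmat (m+2) := by
    ext i j
    simp only [qmat, bmat, Matrix.submatrix_apply, Fin.succAbove_zero, Matrix.of_apply,
      Fin.val_succ]
    rw [if_neg (show ¬((j:ℕ) + 1 < 1) by omega)]
    refine if_congr ?_ rfl rfl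
    push_cast; omega
  have hsub1 : ((qmat m).submatrix ((0:Fin (m+2)).succ).succAbove Fin.succ).det
      = (bmat (m+1)).det := by
    rw [Fin.succ_zero_eq_one]
    rw [Matrix.det_succ_row_zero, Fin.sum_univ_succ]
    have h1s : ∀ i : Fin (m+1), (1 : Fin (m+3)).succAbove i.succ = i.succ.succ := by
      intro i
      apply Fin.succAbove_of_le_castSucc
      rw [Fin.le_def]
      simp
    have h10 : (1 : Fin (m+3)).succAbove 0 = 0 := by
      apply Fin.succAbove_of_castSucc_lt
      rw [Fin.lt_def]
      simp
    have htail2 : ∀ j : Fin (m+1),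
        (-1:ℝ) ^ ((j.succ : Fin (m+2)) : ℕ)
        * ((qmat m).submatrix (1 : Fin (m+3)).succAbove Fin.succ) 0 j.succ
        * Matrix.det ((((qmat m).submatrix (1 : Fin (m+3)).succAbove Fin.succ)).submatrix
            Fin.succ j.succ.succAbove) = 0 := by
      intro j
      have : ((qmat m).submatrix (1 : Fin (m+3)).succAbove Fin.succ) 0 j.succ = 0 := by
        simp only [Matrix.submatrix_apply, h10, qmat, Matrix.of_apply, Fin.val_succ,
          Fin.val_zero]
        rw [if_neg (show ¬((j:ℕ) + 1 + 1 < 1) by omega), if_neg (by push_cast; omega)]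
      rw [this]; ring
    rw [Finset.sum_congr rfl (fun j _ => htail2 j), Finset.sum_const_zero, add_zero]
    have hent : ((qmat m).submatrix (1 : Fin (m+3)).succAbove Fin.succ) 0 0 = 1 := by
      simp only [Matrix.submatrix_apply, h10, qmat, Matrix.of_apply, Fin.val_succ, Fin.val_zero]
      norm_num
    have hmin : (((qmat m).submatrix (1 : Fin (m+3)).succAbove Fin.succ)).submatrix
        Fin.succ (0 : Fin (m+2)).succAbove = bmat (m+1) := by
      ext i j
      simp only [Matrix.submatrix_apply, Fin.succAbove_zero, h1s, qmat, bmat, Matrix.of_apply,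
        Fin.val_succ]
      rw [if_neg (show ¬((j:ℕ) + 1 + 1 < 1) by omega)]
      refine if_congr ?_ rfl rfl
      push_cast; omega
    rw [hent, hmin]
    simp
  rw [h00, h10, hsub0, hsub1]
  simp only [Fin.val_zero, Fin.val_succ]
  ring

lemma bmat_det (m : ℕ) : C m = (bmat m).det := rfl

/-- `P n` is obtained from the band matrix by setting the `(1, n)` entry to
`a` (`1`-indexed). -/
theorem stmt_12 (a : ℝ) (n : ℕ) (hn : 5 ≤ n)
    (P : ℝ)
    (hP : P = Matrix.det (Matrix.of fun i j : Fin n =>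
      if (i : ℕ) = 0 ∧ (j : ℕ) = n - 1 then a
      else if (-1 : ℤ) ≤ ((i : ℕ) : ℤ) - ((j : ℕ) : ℤ) ∧ ((i : ℕ) : ℤ) - ((j : ℕ) : ℤ) ≤ 2 then (1 : ℝ) else 0)) :
    P = C (n - 1) * (1 + a * (-1 : ℝ) ^ (n + 1)) - C (n - 2) + C (n - 3) := by
  subst hP
  obtain ⟨k, rfl⟩ : ∃ k, n = k + 5 := ⟨n - 5, by omega⟩
  set M : Matrix (Fin (k+5)) (Fin (k+5)) ℝ := Matrix.of fun i j : Fin (k+5) =>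
      if (i : ℕ) = 0 ∧ (j : ℕ) = k + 5 - 1 then a
      else if (-1 : ℤ) ≤ ((i : ℕ) : ℤ) - ((j : ℕ) : ℤ) ∧ ((i : ℕ) : ℤ) - ((j : ℕ) : ℤ) ≤ 2
        then (1 : ℝ) else 0 with hM
  have hMa : ∀ i j : Fin (k+5), (i : ℕ) ≠ 0 →
      M i j = if (-1 : ℤ) ≤ ((i : ℕ) : ℤ) - ((j : ℕ) : ℤ) ∧ ((i : ℕ) : ℤ) - ((j : ℕ) : ℤ) ≤ 2
        then (1 : ℝ) else 0 := by
    intro i j hi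
    rw [hM]
    simp only [Matrix.of_apply]
    rw [if_neg (by omega)]
  rw [Matrix.det_succ_row_zero, Fin.sum_univ_succ, Fin.sum_univ_succ]
  -- tail sum: only the last index contributes
  set x : Fin (k+3) := ⟨k+2, by omega⟩ with hx
  have hxss : x.succ.succ = Fin.last (k+4) := rfl
  have htail : ∑ i : Fin (k+3), (-1:ℝ) ^ ((i.succ.succ : Fin (k+5)) : ℕ) * M 0 i.succ.succ
      * Matrix.det (M.submatrix Fin.succ i.succ.succ.succAbove)
      = (-1:ℝ) ^ (k+4) * a * Matrix.det (M.submatrix Fin.succ (Fin.last (k+4)).succAbove) := by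
    rw [Finset.sum_eq_single x]
    · rw [hxss]
      have : M 0 (Fin.last (k+4)) = a := by
        rw [hM]
        simp only [Matrix.of_apply, Fin.val_zero, Fin.val_last]
        rw [if_pos ⟨trivial, by omega⟩]
      rw [this]
      simp [Fin.val_last]
    · intro b _ hb
      have : M 0 b.succ.succ = 0 := by
        rw [hM]
        simp only [Matrix.of_apply, Fin.val_zero, Fin.val_succ]
        rw [if_neg]; apply if_neg
        · push_cast; omega
        · rintro ⟨-, h2⟩
          apply hb
          apply Fin.ext
          simp only [hx]
          omega
      rw [this]; ring
    · intro h; exact absurd (Finset.mem_univ x) h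
  rw [htail]
  -- first minor
  have hsubA : M.submatrix Fin.succ (0 : Fin (k+5)).succAbove = bmat (k+4) := by
    ext i j
    simp only [Matrix.submatrix_apply, Fin.succAbove_zero]
    rw [hMa _ _ (by simp [Fin.val_succ])]
    simp only [bmat, Matrix.of_apply, Fin.val_succ]
    refine if_congr ?_ rfl rfl
    push_cast; omega
  -- second minor equals qmat (k+1)
  have hval : ∀ j : Fin (k+4), (((1 : Fin (k+5)).succAbove j : Fin (k+5)) : ℕ)
      = if (j:ℕ) < 1 then (j:ℕ) else (j:ℕ)+1 := by
    intro j
    rcases Nat.lt_or_ge (j:ℕ) 1 with h | h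
    · rw [Fin.succAbove_of_castSucc_lt, if_pos h, Fin.coe_castSucc]
      rw [Fin.lt_def]; simpa using h
    · rw [Fin.succAbove_of_le_castSucc, if_neg (by omega), Fin.val_succ]
      rw [Fin.le_def]; simpa using h
  have hsubB : M.submatrix Fin.succ (1 : Fin (k+5)).succAbove = qmat (k+1) := by
    ext i j
    simp only [Matrix.submatrix_apply]
    rw [hMa _ _ (by simp [Fin.val_succ])]
    simp only [qmat, Matrix.of_apply, Fin.val_succ, hval j]
    by_cases hj : (j:ℕ) < 1 <;>
      simp only [hj, if_true, if_false] <;>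
      · refine if_congr ?_ rfl rfl
        push_cast; omega
  -- last minor equals transpose of bmat
  have hsubC : M.submatrix Fin.succ (Fin.last (k+4)).succAbove = Matrix.transpose (bmat (k+4)) := by
    ext i j
    simp only [Matrix.submatrix_apply, Fin.succAbove_last, Matrix.transpose_apply]
    rw [hMa _ _ (by simp [Fin.val_succ])]
    simp only [bmat, Matrix.of_apply, Fin.val_succ, Fin.coe_castSucc]
    refine if_congr ?_ rfl rfl
    push_cast; omega
  have hM00 : M 0 0 = 1 := by
    rw [hM]
    simp only [Matrix.of_apply, Fin.val_zero]
    rw [if_neg (by omega)]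
    norm_num
  have hM01 : M 0 (0 : Fin (k+4)).succ = 1 := by
    rw [hM]
    simp only [Matrix.of_apply, Fin.val_zero, Fin.val_succ]
    rw [if_neg (by omega)]
    norm_num
  rw [hsubA, hM00, hM01]
  simp only [Fin.succ_zero_eq_one]
  rw [hsubB, hsubC, Matrix.det_transpose, qmat_det]
  have e1 : k + 5 - 1 = k + 4 := rfl
  have e2 : k + 5 - 2 = k + 3 := rfl
  have e3 : k + 5 - 3 = k + 2 := rfl
  rw [e1, e2, e3, bmat_det (k+4), bmat_det (k+3), bmat_det (k+2)]
  have epow : (-1 : ℝ) ^ (k + 5 + 1) = (-1 : ℝ) ^ (k + 4) := by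
    rw [show k + 5 + 1 = (k+4) + 2 from rfl, pow_add]
    norm_num
  rw [epow]
  simp only [Fin.val_zero, Fin.val_succ, Fin.val_one, show k+1+2 = k+3 from rfl,
    show k+1+1 = k+2 from rfl]
  ring
end
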